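/- arXiv:2410.23644 — 5 statements merged into one kernel-verified Lean document; each statement's English description precedes it below -/
import Mathlib

section
/- Let (𝒳, ρ) be a totally bounded metric space and η : 𝒳 → 𝒴 a labeling function. Then the following are equivalent: (i) inf{ρ(x,x') : x, x' ∈ 𝒳, η(x) ≠ η(x')} = 0; (ii) there exists a sequence (X_n)_{n≥1} in 𝒳 and a nearest neighbor process (X̃_n) for it such that limsup_{N→∞} (1/N) Σ_{n=1}^N 1{η(X_n) ≠ η(X̃_n)} > 0. -/
open MeasureTheory Filter Set Metric
open scoped ENNReal NNReal

noncomputable section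

/-- The margin of a point: distance to the nearest differently-labeled point (`⊤` if none). -/
def margin {α 𝒴 : Type*} [PseudoMetricSpace α] (η : α → 𝒴) (x : α) : ℝ≥0∞ :=
  ⨅ (x' : α) (_ : η x' ≠ η x), edist x x'

/-- The boundary of a labeling function: the set of points with zero margin. -/
def labelBoundary {α 𝒴 : Type*} [PseudoMetricSpace α] (η : α → 𝒴) : Set α :=
  {x | margin η x = 0}

/-- A set is mutually-labeling for `η` if its diameter is smaller than the margin of
each of its points. -/
def MutuallyLabeling {α 𝒴 : Type*} [PseudoMetricSpace α] (η : α → 𝒴) (U : Set α) : Prop :=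
  ∀ x ∈ U, EMetric.diam U < margin η x

/-- `Xt` is a nearest-neighbor process for the sequence `X` (indices start at 1):
for every `n ≥ 2`, `Xt n` is one of `X 1, …, X (n-1)` realizing the minimal distance
to `X n`. -/
def IsNNProcess {α : Type*} [PseudoMetricSpace α] (X Xt : ℕ → α) : Prop :=
  ∀ n, 2 ≤ n → (∃ m, 1 ≤ m ∧ m < n ∧ Xt n = X m) ∧
    ∀ m, 1 ≤ m → m < n → dist (X n) (Xt n) ≤ dist (X n) (X m)

/-- The natural filtration of the process `X`: at time `n` it is `σ(X 1, …, X n)`. -/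
def natFilt {Ω α : Type*} [MeasurableSpace α] (X : ℕ → Ω → α) (n : ℕ) : MeasurableSpace Ω :=
  ⨆ m ∈ Set.Icc 1 n, MeasurableSpace.comap (X m) inferInstance

/-- `X` is uniformly dominated by `ν` at rate `ε` (uniform absolute continuity):
for every `δ > 0` and every measurable `A` with `ν A < δ`, almost surely
`P(X n ∈ A | 𝓕 (n-1)) < ε δ` for every `n ≥ 1`. -/
def UniformlyDominatedAtRate {Ω α : Type*} [MeasurableSpace Ω] [MeasurableSpace α]
    (P : Measure Ω) (X : ℕ → Ω → α) (ν : Measure α) (ε : ℝ → ℝ) : Prop :=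
  ∀ δ : ℝ, 0 < δ → ∀ A : Set α, MeasurableSet A → ν A < ENNReal.ofReal δ →
    ∀ᵐ ω ∂P, ∀ n, 1 ≤ n →
      (P[fun ω' => A.indicator (fun _ => (1 : ℝ)) (X n ω') | natFilt X (n - 1)]) ω < ε δ

/-- `X` is uniformly dominated by `ν`. -/
def UniformlyDominated {Ω α : Type*} [MeasurableSpace Ω] [MeasurableSpace α]
    (P : Measure Ω) (X : ℕ → Ω → α) (ν : Measure α) : Prop :=
  ∀ ε : ℝ, 0 < ε → ∃ δ : ℝ, 0 < δ ∧ ∀ A : Set α, MeasurableSet A → ν A < ENNReal.ofReal δ →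
    ∀ᵐ ω ∂P, ∀ n, 1 ≤ n →
      (P[fun ω' => A.indicator (fun _ => (1 : ℝ)) (X n ω') | natFilt X (n - 1)]) ω < ε

/-- `X` is ergodically dominated by `ν` (ergodic continuity). -/
def ErgodicallyDominated {Ω α : Type*} [MeasurableSpace Ω] [MeasurableSpace α]
    (P : Measure Ω) (X : ℕ → Ω → α) (ν : Measure α) : Prop :=
  ∀ ε : ℝ, 0 < ε → ∃ δ : ℝ, 0 < δ ∧ ∀ A : Set α, MeasurableSet A → ν A < ENNReal.ofReal δ →
    ∀ᵐ ω ∂P, Filter.limsup (fun N : ℕ =>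
      (∑ n ∈ Finset.Icc 1 N, A.indicator (fun _ => (1 : ℝ)) (X n ω)) / N) atTop < ε

/-- `X` is a `σ`-smoothed process with respect to `ν`. -/
def Smoothed {Ω α : Type*} [MeasurableSpace Ω] [MeasurableSpace α]
    (P : Measure Ω) (X : ℕ → Ω → α) (ν : Measure α) (σ : ℝ) : Prop :=
  ∀ A : Set α, MeasurableSet A →
    ∀ᵐ ω ∂P, ∀ n, 1 ≤ n →
      (P[fun ω' => A.indicator (fun _ => (1 : ℝ)) (X n ω') | natFilt X (n - 1)]) ω ≤
        σ⁻¹ * (ν A).toReal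

/-- `α` is a `d`-doubling metric space: every ball can be covered by `2 ^ d` balls of
half the radius. -/
def DoublingWith (α : Type*) [PseudoMetricSpace α] (d : ℕ) : Prop :=
  ∀ (x : α) (r : ℝ), ∃ t : Finset α, t.card ≤ 2 ^ d ∧ ball x r ⊆ ⋃ y ∈ t, ball y (r / 2)

/-- `(α, ν)` is upper doubling with parameters `(c, d)`. -/
def UpperDoubling (α : Type*) [PseudoMetricSpace α] [MeasurableSpace α]
    (ν : Measure α) (c : ℝ) (d : ℕ) : Prop :=
  DoublingWith α d ∧ ∀ (x : α) (r : ℝ), 0 < r → ν (ball x r) ≤ ENNReal.ofReal (c * r ^ d)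

/-- The `r`-packing number of a set `U`. -/
def packingNumber {α : Type*} [PseudoMetricSpace α] (r : ℝ) (U : Set α) : ℕ∞ :=
  ⨆ (Z : Finset α) (_ : ↑Z ⊆ U ∧ ∀ z ∈ Z, ∀ z' ∈ Z, z ≠ z' → r ≤ dist z z'), (Z.card : ℕ∞)

/-- The `r`-covering number of a set `A`. -/
def coveringNumber {α : Type*} [PseudoMetricSpace α] (r : ℝ) (A : Set α) : ℕ∞ :=
  ⨅ (t : Finset α) (_ : A ⊆ ⋃ y ∈ t, ball y r), (t.card : ℕ∞)

/-- The upper box-counting dimension of a set. -/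
def boxDim {α : Type*} [PseudoMetricSpace α] (A : Set α) : ℝ :=
  Filter.limsup (fun r : ℝ => Real.log ((coveringNumber r A).toNat : ℝ) / Real.log (1 / r))
    (nhdsWithin 0 (Set.Ioi 0))

/-- The mutually-labeling covering number of `V` for `η`. -/
def mlCoveringNumber {α 𝒴 : Type*} [PseudoMetricSpace α] (η : α → 𝒴) (V : Set α) : ℕ∞ :=
  ⨅ (𝒰 : Finset (Set α)) (_ : (∀ U ∈ 𝒰, MutuallyLabeling η U) ∧ V ⊆ ⋃ U ∈ 𝒰, U),
    (𝒰.card : ℕ∞)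

/-- The `r`-expansion of a set. -/
def expansion {α : Type*} [PseudoMetricSpace α] (A : Set α) (r : ℝ) : Set α :=
  ⋃ x ∈ A, ball x r

/-- The upper Minkowski content of `A` with respect to `ν`. -/
def minkowskiContent {α : Type*} [PseudoMetricSpace α] [MeasurableSpace α]
    (ν : Measure α) (A : Set α) : ℝ≥0∞ :=
  Filter.limsup (fun r : ℝ => (ν (expansion A r) - ν A) / ENNReal.ofReal r)
    (nhdsWithin 0 (Set.Ioi 0))

/-- A length space: the distance between two points is the infimum of lengths of
continuous paths joining them. -/
def IsLengthSpace (α : Type*) [PseudoMetricSpace α] : Prop :=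
  ∀ x y : α, edist x y =
    ⨅ (γ : ℝ → α) (_ : ContinuousOn γ (Set.Icc 0 1)) (_ : γ 0 = x) (_ : γ 1 = y),
      eVariationOn γ (Set.Icc 0 1)

/-- The ball associated to a (center, dyadic level) pair: radius `2 ^ (-level)`. -/
def ballOf {α : Type*} [PseudoMetricSpace α] (p : α × ℕ) : Set α :=
  ball p.1 ((2 : ℝ) ^ (-(p.2 : ℤ)))

/-- The insertion rank of a new point `x` relative to an existing cover tree `C`:
the least `ℓ ≥ 1` such that no ball of radius `2 ^ (-ℓ)` in `C` contains `x`. -/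
def nextRank {α : Type*} [PseudoMetricSpace α] (C : Set (α × ℕ)) (x : α) : ℕ :=
  sInf {ℓ : ℕ | 1 ≤ ℓ ∧ ∀ q ∈ C, q.2 = ℓ → x ∉ ballOf q}

/-- Sequentially constructed cover trees for the points `a 1, a 2, …`; a cover tree is
recorded as the set of its (center, dyadic level) pairs. -/
def coverTree {α : Type*} [PseudoMetricSpace α] (a : ℕ → α) : ℕ → Set (α × ℕ)
  | 0 => ∅
  | 1 => {p | p.1 = a 1}
  | (k + 2) => coverTree a (k + 1) ∪
      {p | p.1 = a (k + 2) ∧ nextRank (coverTree a (k + 1)) (a (k + 2)) ≤ p.2}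

/-- The insertion ranks of the sequentially constructed cover trees. -/
def insertionRank {α : Type*} [PseudoMetricSpace α] (a : ℕ → α) : ℕ → ℕ
  | 0 => 0
  | 1 => 0
  | (k + 2) => nextRank (coverTree a (k + 1)) (a (k + 2))


/-! ### Auxiliary lemmas for the proof -/

lemma nn_sep {α : Type*} [MetricSpace α] (F : Finset α) :
    ∃ m : ℝ, 0 < m ∧ ∀ p ∈ F, ∀ q ∈ F, p ≠ q → m ≤ dist p q := by
  classical
  by_cases hne : F.offDiag.Nonempty
  · set s := F.offDiag.image (fun pq => dist pq.1 pq.2) with hs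
    have hsne : s.Nonempty := hne.image _
    refine ⟨s.min' hsne, ?_, ?_⟩
    · obtain ⟨pq, hpq, hval⟩ := Finset.mem_image.mp (s.min'_mem hsne)
      rw [← hval]
      exact dist_pos.mpr (Finset.mem_offDiag.mp hpq).2.2
    · intro p hp q hq hpq
      exact s.min'_le _ (Finset.mem_image.mpr ⟨(p, q), Finset.mem_offDiag.mpr ⟨hp, hq, hpq⟩, rfl⟩)
  · exact ⟨1, one_pos, fun p hp q hq hpq =>
      absurd ⟨(p, q), Finset.mem_offDiag.mpr ⟨hp, hq, hpq⟩⟩ hne⟩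

lemma nn_step {α 𝒴 : Type*} [MetricSpace α] {η : α → 𝒴}
    (h : ∀ ε : ℝ, 0 < ε → ∃ x y : α, η x ≠ η y ∧ dist x y < ε) (F : Finset α) :
    ∃ w : α × α, η w.1 ≠ η w.2 ∧ ∀ p ∈ F, dist w.2 w.1 ≤ dist w.2 p := by
  classical
  obtain ⟨m, hm0, hmF⟩ := nn_sep F
  obtain ⟨x, y, hxy, hd⟩ := h (m / 4) (by linarith)
  have hd0 : 0 < dist x y := dist_pos.mpr (fun e => hxy (by rw [e]))
  by_cases hA : ∀ p ∈ F, dist x y ≤ dist y p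
  · exact ⟨(x, y), hxy, fun p hp => by simpa [dist_comm y x] using hA p hp⟩
  by_cases hB : ∀ q ∈ F, dist x y ≤ dist x q
  · refine ⟨(y, x), fun e => hxy e.symm, fun q hq => ?_⟩
    simpa [dist_comm x y] using hB q hq
  push_neg at hA hB
  obtain ⟨p, hpF, hpy⟩ := hA
  obtain ⟨q, hqF, hqx⟩ := hB
  have hpq : p = q := by
    by_contra hne
    have h1 := hmF p hpF q hqF hne
    have t1 : dist p q ≤ dist p y + dist y x + dist x q := dist_triangle4 p y x q
    rw [dist_comm p y, dist_comm y x] at t1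
    linarith
  subst hpq
  by_cases hpx : η p = η x
  · have hpy' : η p ≠ η y := fun e => hxy (hpx.symm.trans e)
    refine ⟨(p, y), hpy', fun r hr => ?_⟩
    by_cases hrp : r = p
    · subst hrp; exact le_refl _
    · have hm := hmF p hpF r hr (fun e => hrp e.symm)
      have t : dist p r ≤ dist p y + dist y r := dist_triangle _ _ _
      rw [dist_comm p y] at t
      show dist y p ≤ dist y r
      linarith
  · refine ⟨(p, x), fun e => hpx e, fun r hr => ?_⟩
    by_cases hrp : r = p
    · subst hrp; exact le_refl _
    · have hm := hmF p hpF r hr (fun e => hrp e.symm)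
      have t : dist p r ≤ dist p x + dist x r := dist_triangle _ _ _
      rw [dist_comm p x] at t
      show dist x p ≤ dist x r
      linarith

def nnS {α : Type*} [DecidableEq α] (pf : Finset α → α × α) : ℕ → Finset α
  | 0 => ∅
  | (k + 1) => nnS pf k ∪ {(pf (nnS pf k)).1, (pf (nnS pf k)).2}

lemma nnS_mono {α : Type*} [DecidableEq α] (pf : Finset α → α × α) :
    Monotone (nnS pf) := by
  apply monotone_nat_of_le_succ
  intro k
  exact Finset.subset_union_left

lemma nnS_mem {α : Type*} [DecidableEq α] (pf : Finset α → α × α) {j k : ℕ} (h : j < k) :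
    (pf (nnS pf j)).1 ∈ nnS pf k ∧ (pf (nnS pf j)).2 ∈ nnS pf k := by
  have h1 : (pf (nnS pf j)).1 ∈ nnS pf (j + 1) := by simp [nnS]
  have h2 : (pf (nnS pf j)).2 ∈ nnS pf (j + 1) := by simp [nnS]
  exact ⟨nnS_mono pf h h1, nnS_mono pf h h2⟩

noncomputable def nnPick {α : Type*} [MetricSpace α] (X : ℕ → α) (n : ℕ) : ℕ :=
  if h : 2 ≤ n then
    Classical.choose (Finset.exists_min_image (Finset.Icc 1 (n - 1))
      (fun m => dist (X n) (X m)) ⟨1, Finset.mem_Icc.mpr ⟨le_refl 1, by omega⟩⟩)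
  else 0

lemma nnPick_spec {α : Type*} [MetricSpace α] (X : ℕ → α) {n : ℕ} (h : 2 ≤ n) :
    nnPick X n ∈ Finset.Icc 1 (n - 1) ∧
      ∀ m ∈ Finset.Icc 1 (n - 1), dist (X n) (X (nnPick X n)) ≤ dist (X n) (X m) := by
  rw [nnPick, dif_pos h]
  exact Classical.choose_spec (Finset.exists_min_image (Finset.Icc 1 (n - 1))
      (fun m => dist (X n) (X m)) ⟨1, Finset.mem_Icc.mpr ⟨le_refl 1, by omega⟩⟩)

noncomputable def nnX {α : Type*} [MetricSpace α] [DecidableEq α]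
    (pf : Finset α → α × α) (n : ℕ) : α :=
  if Odd n then (pf (nnS pf ((n - 1) / 2))).1 else (pf (nnS pf ((n - 1) / 2))).2

noncomputable def nnXt {α : Type*} [MetricSpace α] [DecidableEq α]
    (pf : Finset α → α × α) (n : ℕ) : α :=
  if Even n then nnX pf (n - 1) else nnX pf (nnPick (nnX pf) n)

lemma nnX_odd {α : Type*} [MetricSpace α] [DecidableEq α] (pf : Finset α → α × α) (j : ℕ) :
    nnX pf (2 * j + 1) = (pf (nnS pf j)).1 := by
  have h1 : Odd (2 * j + 1) := ⟨j, by ring⟩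
  have h2 : (2 * j + 1 - 1) / 2 = j := by omega
  rw [nnX, if_pos h1, h2]

lemma nnX_even {α : Type*} [MetricSpace α] [DecidableEq α] (pf : Finset α → α × α) (j : ℕ) :
    nnX pf (2 * j + 2) = (pf (nnS pf j)).2 := by
  have h1 : ¬ Odd (2 * j + 2) := by rw [Nat.odd_iff]; omega
  have h2 : (2 * j + 2 - 1) / 2 = j := by omega
  rw [nnX, if_neg h1, h2]

lemma nnXt_even {α : Type*} [MetricSpace α] [DecidableEq α] (pf : Finset α → α × α) (j : ℕ) :
    nnXt pf (2 * j + 2) = nnX pf (2 * j + 1) := by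
  have h1 : Even (2 * j + 2) := ⟨j + 1, by ring⟩
  have h2 : 2 * j + 2 - 1 = 2 * j + 1 := by omega
  rw [nnXt, if_pos h1, h2]

lemma nn_key {α 𝒴 : Type*} [MetricSpace α] [DecidableEq α] {η : α → 𝒴}
    {pf : Finset α → α × α}
    (hpf : ∀ F : Finset α, η (pf F).1 ≠ η (pf F).2 ∧
      ∀ p ∈ F, dist (pf F).2 (pf F).1 ≤ dist (pf F).2 p)
    {k m : ℕ} (hm1 : 1 ≤ m) (hm2 : m < 2 * k + 2) :
    dist (nnX pf (2 * k + 2)) (nnX pf (2 * k + 1)) ≤ dist (nnX pf (2 * k + 2)) (nnX pf m) := by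
  rw [nnX_even, nnX_odd]
  rcases Nat.even_or_odd m with he | ho
  · obtain ⟨j, hj⟩ := he
    have hj1 : 1 ≤ j := by omega
    have hmj : m = 2 * (j - 1) + 2 := by omega
    rw [hmj, nnX_even]
    exact (hpf _).2 _ ((nnS_mem pf (show j - 1 < k by omega)).2)
  · obtain ⟨j, hj⟩ := ho
    have hmj : m = 2 * j + 1 := by omega
    rw [hmj, nnX_odd]
    rcases eq_or_lt_of_le (show j ≤ k by omega) with hjk | hjk
    · rw [hjk]
    · exact (hpf _).2 _ ((nnS_mem pf hjk).1)

lemma nn_forward {α 𝒴 : Type*} [MetricSpace α] [DecidableEq α] {η : α → 𝒴}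
    {pf : Finset α → α × α}
    (hpf : ∀ F : Finset α, η (pf F).1 ≠ η (pf F).2 ∧
      ∀ p ∈ F, dist (pf F).2 (pf F).1 ≤ dist (pf F).2 p) :
    IsNNProcess (nnX pf) (nnXt pf) ∧
      ∀ k, 1 ≤ k → η (nnX pf (2 * k)) ≠ η (nnXt pf (2 * k)) := by
  constructor
  · intro n hn
    rcases Nat.even_or_odd n with he | ho
    · obtain ⟨k, hk⟩ : ∃ k, n = 2 * k + 2 := by
        obtain ⟨j, hj⟩ := he; exact ⟨j - 1, by omega⟩
      subst hk
      have hXt : nnXt pf (2 * k + 2) = nnX pf (2 * k + 1) := nnXt_even pf k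
      refine ⟨⟨2 * k + 1, by omega, by omega, hXt⟩, fun m hm1 hm2 => ?_⟩
      rw [hXt]
      exact nn_key hpf hm1 hm2
    · have hne : ¬ Even n := by rw [Nat.even_iff]; rw [Nat.odd_iff] at ho; omega
      have hXt : nnXt pf n = nnX pf (nnPick (nnX pf) n) := by rw [nnXt, if_neg hne]
      obtain ⟨hmem, hmin⟩ := nnPick_spec (nnX pf) hn
      rw [Finset.mem_Icc] at hmem
      refine ⟨⟨nnPick (nnX pf) n, hmem.1, by omega, hXt⟩, fun m hm1 hm2 => ?_⟩
      rw [hXt]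
      exact hmin m (Finset.mem_Icc.mpr ⟨hm1, by omega⟩)
  · intro k hk
    have h2 : 2 * k = 2 * (k - 1) + 2 := by omega
    rw [h2, nnXt_even, nnX_even, nnX_odd]
    exact ((hpf _).1).symm

lemma nn_limsup_half {g : ℕ → ℝ} (h0 : ∀ n, 0 ≤ g n) (h1 : ∀ n, g n ≤ 1)
    (he : ∀ k, 1 ≤ k → g (2 * k) = 1) :
    0 < Filter.limsup (fun N : ℕ => (∑ n ∈ Finset.Icc 1 N, g n) / N) atTop := by
  have hsum : ∀ K : ℕ, 1 ≤ K → (K : ℝ) ≤ ∑ n ∈ Finset.Icc 1 (2 * K), g n := by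
    intro K hK
    have e1 : ∑ i ∈ Finset.Icc 1 K, g (2 * i) = (K : ℝ) := by
      rw [Finset.sum_congr rfl (fun i hi => he i (Finset.mem_Icc.mp hi).1)]
      simp [Nat.card_Icc]
    have e2 : ∑ i ∈ Finset.Icc 1 K, g (2 * i) =
        ∑ n ∈ (Finset.Icc 1 K).image (fun i => 2 * i), g n :=
      (Finset.sum_image (by intro a _ b _ hab; omega)).symm
    have e3 : ∑ n ∈ (Finset.Icc 1 K).image (fun i => 2 * i), g n ≤
        ∑ n ∈ Finset.Icc 1 (2 * K), g n := by
      apply Finset.sum_le_sum_of_subset_of_nonneg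
      · intro n hn
        obtain ⟨i, hi, rfl⟩ := Finset.mem_image.mp hn
        rw [Finset.mem_Icc] at hi ⊢
        omega
      · exact fun n _ _ => h0 n
    rw [e2] at e1
    linarith
  have hbd : IsBoundedUnder (· ≤ ·) atTop
      (fun N : ℕ => (∑ n ∈ Finset.Icc 1 N, g n) / N) := by
    apply isBoundedUnder_of
    refine ⟨1, fun N => ?_⟩
    have hs : ∑ n ∈ Finset.Icc 1 N, g n ≤ (N : ℝ) := by
      calc ∑ n ∈ Finset.Icc 1 N, g n ≤ ∑ n ∈ Finset.Icc 1 N, (1 : ℝ) :=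
            Finset.sum_le_sum (fun n _ => h1 n)
        _ = (N : ℝ) := by simp [Nat.card_Icc]
    rcases Nat.eq_zero_or_pos N with h | h
    · subst h; simp
    · rw [div_le_one (by exact_mod_cast Nat.cast_pos.mpr h)]
      exact hs
  have hfreq : ∃ᶠ N : ℕ in atTop,
      (1 / 2 : ℝ) ≤ (∑ n ∈ Finset.Icc 1 N, g n) / N := by
    rw [frequently_atTop]
    intro a
    refine ⟨2 * (a + 1), by omega, ?_⟩
    have hpos : (0 : ℝ) < ((2 * (a + 1) : ℕ) : ℝ) := by positivity
    rw [le_div_iff₀ hpos]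
    have := hsum (a + 1) (by omega)
    push_cast at this ⊢
    linarith
  have := le_limsup_of_frequently_le hfreq hbd
  linarith

lemma nn_backward {α 𝒴 : Type*} [MetricSpace α]
    (htb : TotallyBounded (Set.univ : Set α)) {η : α → 𝒴}
    {r : ℝ} (hr : 0 < r) (hsep : ∀ x y : α, η x ≠ η y → r ≤ dist x y)
    {X Xt : ℕ → α} (hNN : IsNNProcess X Xt) :
    Tendsto (fun N : ℕ => (∑ n ∈ Finset.Icc 1 N,
      Set.indicator {q : α × α | η q.1 ≠ η q.2} (fun _ => (1 : ℝ)) (X n, Xt n)) / N)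
      atTop (nhds 0) := by
  classical
  obtain ⟨t, htf, hcov⟩ := Metric.totallyBounded_iff.mp htb (r / 3) (by linarith)
  have hcov' : ∀ x : α, ∃ y, y ∈ t ∧ dist x y < r / 3 := by
    intro x
    have hx := hcov (Set.mem_univ x)
    rw [Set.mem_iUnion₂] at hx
    obtain ⟨y, hy, hxy⟩ := hx
    exact ⟨y, hy, Metric.mem_ball.mp hxy⟩
  choose c hc1 hc2 using hcov'
  set T := htf.toFinset with hT
  -- mistakes with index ≥ 2 claim distinct centers
  have hinj : ∀ N : ℕ, Set.InjOn (fun n => c (X n))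
      ((Finset.Icc 2 N).filter (fun n => η (X n) ≠ η (Xt n)) : Finset ℕ) := by
    intro N n hn n' hn' heq
    simp only [Finset.coe_filter, Set.mem_setOf_eq, Finset.mem_Icc] at hn hn'
    dsimp only at heq
    by_contra hne
    -- wlog n < n'
    rcases lt_trichotomy n n' with hlt | heqq | hlt
    · have h1 := (hNN n' (by omega)).2 n (by omega) hlt
      have h2 := hsep _ _ hn'.2
      have d1 := hc2 (X n')
      have d2 := hc2 (X n)
      rw [← heq] at d1
      have h5 : dist (X n') (X n) ≤ dist (X n') (c (X n)) + dist (X n) (c (X n)) :=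
        dist_triangle_right _ _ _
      linarith
    · exact hne heqq
    · have h1 := (hNN n (by omega)).2 n' (by omega) hlt
      have h2 := hsep _ _ hn.2
      have d1 := hc2 (X n)
      have d2 := hc2 (X n')
      rw [heq] at d1
      have h5 : dist (X n) (X n') ≤ dist (X n) (c (X n')) + dist (X n') (c (X n')) :=
        dist_triangle_right _ _ _
      linarith
  -- uniform bound on number of mistakes
  have hcard : ∀ N : ℕ, (((Finset.Icc 1 N).filter (fun n => η (X n) ≠ η (Xt n))).card : ℝ)
      ≤ T.card + 1 := by
    intro N
    have hsub : (Finset.Icc 1 N).filter (fun n => η (X n) ≠ η (Xt n)) ⊆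
        insert 1 ((Finset.Icc 2 N).filter (fun n => η (X n) ≠ η (Xt n))) := by
      intro n hn
      simp only [Finset.mem_filter, Finset.mem_Icc] at hn
      rcases eq_or_lt_of_le hn.1.1 with h | h
      · exact Finset.mem_insert.mpr (Or.inl h.symm)
      · exact Finset.mem_insert.mpr (Or.inr (Finset.mem_filter.mpr
          ⟨Finset.mem_Icc.mpr ⟨h, hn.1.2⟩, hn.2⟩))
    have h2 : ((Finset.Icc 2 N).filter (fun n => η (X n) ≠ η (Xt n))).card ≤ T.card := by
      apply Finset.card_le_card_of_injOn (fun n => c (X n))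
      · intro n _
        rw [hT, Finset.mem_coe, Set.Finite.mem_toFinset]
        exact hc1 (X n)
      · exact hinj N
    have h3 := Finset.card_le_card hsub
    have h4 := Finset.card_insert_le 1 ((Finset.Icc 2 N).filter (fun n => η (X n) ≠ η (Xt n)))
    have : ((Finset.Icc 1 N).filter (fun n => η (X n) ≠ η (Xt n))).card ≤ T.card + 1 := by omega
    exact_mod_cast this
  -- sum = card of mistakes
  have hsum : ∀ N : ℕ, (∑ n ∈ Finset.Icc 1 N,
      Set.indicator {q : α × α | η q.1 ≠ η q.2} (fun _ => (1 : ℝ)) (X n, Xt n)) =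
      (((Finset.Icc 1 N).filter (fun n => η (X n) ≠ η (Xt n))).card : ℝ) := by
    intro N
    rw [← Finset.sum_boole]
    apply Finset.sum_congr rfl
    intro n _
    rw [Set.indicator_apply]
    simp only [Set.mem_setOf_eq]
  -- squeeze
  apply squeeze_zero (fun N => ?_) (fun N => ?_)
    (tendsto_const_div_atTop_nhds_zero_nat ((T.card : ℝ) + 1))
  · apply div_nonneg _ (Nat.cast_nonneg N)
    apply Finset.sum_nonneg
    intro n _
    exact Set.indicator_nonneg (fun _ _ => zero_le_one) _
  · rcases Nat.eq_zero_or_pos N with h | h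
    · subst h; simp
    · rw [hsum N]
      gcongr
      exact hcard N


/-- Non-convergence in the worst case: in a totally bounded metric
space, there is a sequence of instances together with a nearest neighbor process on
which the nearest neighbor rule has positive asymptotic mistake rate if and only if
there is no positive separation between the classes of `η`. -/
theorem nn_worst_case_nonconvergence_iff {α 𝒴 : Type*} [MetricSpace α]
    (htb : TotallyBounded (Set.univ : Set α)) (η : α → 𝒴) :
    (⨅ (p : α × α) (_ : η p.1 ≠ η p.2), edist p.1 p.2) = 0 ↔
      ∃ X Xt : ℕ → α, IsNNProcess X Xt ∧
        0 < Filter.limsup (fun N : ℕ =>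
          (∑ n ∈ Finset.Icc 1 N,
            Set.indicator {q : α × α | η q.1 ≠ η q.2} (fun _ => (1 : ℝ)) (X n, Xt n)) / N)
          atTop := by
  classical
  constructor
  · intro h
    have hpair : ∀ ε : ℝ, 0 < ε → ∃ x y : α, η x ≠ η y ∧ dist x y < ε := by
      intro ε hε
      have h0 : (⨅ (p : α × α) (_ : η p.1 ≠ η p.2), edist p.1 p.2) < ENNReal.ofReal ε := by
        rw [h]; exact ENNReal.ofReal_pos.mpr hε
      rw [iInf_lt_iff] at h0
      obtain ⟨p, hp⟩ := h0
      rw [iInf_lt_iff] at hp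
      obtain ⟨hne, hlt⟩ := hp
      refine ⟨p.1, p.2, hne, ?_⟩
      rw [edist_dist] at hlt
      exact (ENNReal.ofReal_lt_ofReal_iff hε).mp hlt
    choose pf hpf using fun F => nn_step hpair F
    obtain ⟨hproc, hmist⟩ := nn_forward hpf
    refine ⟨nnX pf, nnXt pf, hproc, ?_⟩
    apply nn_limsup_half
    · intro n
      exact Set.indicator_nonneg (fun _ _ => zero_le_one) _
    · intro n
      rw [Set.indicator_apply]
      split <;> norm_num
    · intro k hk
      exact Set.indicator_of_mem
        (show (nnX pf (2 * k), nnXt pf (2 * k)) ∈ {q : α × α | η q.1 ≠ η q.2}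
          from hmist k hk) _
  · rintro ⟨X, Xt, hNN, hpos⟩
    by_contra h0
    set I := ⨅ (p : α × α) (_ : η p.1 ≠ η p.2), edist p.1 p.2 with hI
    have hIpos : 0 < I := pos_iff_ne_zero.mpr h0
    have hc0 : (0 : ℝ≥0∞) < min I 1 := lt_min hIpos one_pos
    have hctop : min I 1 ≠ ⊤ := ((min_le_right I 1).trans_lt ENNReal.one_lt_top).ne
    set r := (min I 1).toReal with hrdef
    have hr : 0 < r := ENNReal.toReal_pos hc0.ne' hctop
    have hsep : ∀ x y : α, η x ≠ η y → r ≤ dist x y := by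
      intro x y hxy
      have h1 : I ≤ edist x y := by
        refine iInf_le_of_le (x, y) ?_
        exact iInf_le _ hxy
      have h2 : ENNReal.ofReal r ≤ edist x y := by
        rw [hrdef, ENNReal.ofReal_toReal hctop]
        exact le_trans (min_le_left _ _) h1
      rw [edist_dist] at h2
      exact (ENNReal.ofReal_le_ofReal_iff dist_nonneg).mp h2
    have hlim := (nn_backward htb hr hsep hNN).limsup_eq
    rw [hlim] at hpos
    exact lt_irrefl 0 hpos
end
end

section
/- Let (𝒳, ρ, ν) be a metric measure space with ν a finite Borel measure, let (X_n)_{n≥1} be a stochastic process in 𝒳 on a probability space (Ω, 𝓕, P) with natural filtration (𝓕_n), and suppose (X_n) is uniformly dominated by ν at rate ε : (0,∞) → (0,∞). Fix δ > 0 and let (A_n)_{n≥1} be a predictable sequence of random measurable subsets of 𝒳 (i.e., the indicator (ω, x) ↦ 1{x ∈ A_n(ω)} is jointly measurable and ω ↦ A_n(ω) is 𝓕_{n−1}-measurable) such that limsup_{n→∞} ν(A_n) < δ almost surely. Then limsup_{N→∞} (1/N) Σ_{n=1}^N 1{X_n ∈ A_n} ≤ ε(δ) almost surely. -/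
open MeasureTheory Filter Set Metric
open scoped ENNReal NNReal

noncomputable section

section SimpleProd

variable {Ω' β : Type*}

/-- A finite union of measurable rectangles whose bases form a measurable partition. -/
def IsSimpleProd (m : MeasurableSpace Ω') (mβ : MeasurableSpace β) (t : Set (Ω' × β)) : Prop :=
  ∃ (ι : Type) (_ : Fintype ι) (F : ι → Set Ω') (A : ι → Set β),
    (∀ i, MeasurableSet[m] (F i)) ∧ (∀ i, MeasurableSet[mβ] (A i)) ∧
    Pairwise (Function.onFun Disjoint F) ∧ (⋃ i, F i) = Set.univ ∧ t = ⋃ i, (F i ×ˢ A i)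

variable {m : MeasurableSpace Ω'} {mβ : MeasurableSpace β}

lemma IsSimpleProd.measurableSet {t : Set (Ω' × β)} (ht : IsSimpleProd m mβ t) :
    MeasurableSet[m.prod mβ] t := by
  obtain ⟨ι, hι, F, A, hF, hA, -, -, rfl⟩ := ht
  exact MeasurableSet.iUnion fun i =>
    (MeasurableSet.prod (hF i) (hA i) : MeasurableSet[m.prod mβ] _)

lemma isSimpleProd_empty : IsSimpleProd m mβ (∅ : Set (Ω' × β)) := by
  refine ⟨PUnit, inferInstance, fun _ => Set.univ, fun _ => ∅, fun _ => MeasurableSet.univ,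
    fun _ => MeasurableSet.empty, ?_, ?_, ?_⟩
  · intro i j hij; exact absurd rfl hij
  · simp [Set.iUnion_const]
  · simp

lemma isSimpleProd_rect {F : Set Ω'} {A : Set β} (hF : MeasurableSet[m] F)
    (hA : MeasurableSet[mβ] A) : IsSimpleProd m mβ (F ×ˢ A) := by
  refine ⟨Bool, inferInstance, fun b => if b then F else Fᶜ, fun b => if b then A else ∅,
    ?_, ?_, ?_, ?_, ?_⟩
  · intro b; cases b <;> simp [hF, hF.compl]
  · intro b; cases b <;> simp [hA]
  · intro b b' hbb'
    cases b <;> cases b' <;> simp_all [Function.onFun, disjoint_compl_left, disjoint_compl_right]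
  · ext ω; simp; tauto
  · ext q; simp

lemma mem_iUnion_prod_iff {ι : Type*} {F : ι → Set Ω'} {A : ι → Set β}
    (hdisj : Pairwise (Function.onFun Disjoint F)) {i₀ : ι} {ω : Ω'} (hω : ω ∈ F i₀) (x : β) :
    ((ω, x) ∈ ⋃ i, (F i ×ˢ A i)) ↔ x ∈ A i₀ := by
  constructor
  · rintro h
    rcases Set.mem_iUnion.1 h with ⟨i, hωi, hxi⟩
    rcases eq_or_ne i i₀ with rfl | hne
    · exact hxi
    · exact absurd hω (Set.disjoint_left.1 (hdisj hne) hωi)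
  · intro hx
    exact Set.mem_iUnion.2 ⟨i₀, ⟨hω, hx⟩⟩

lemma IsSimpleProd.compl {t : Set (Ω' × β)} (ht : IsSimpleProd m mβ t) :
    IsSimpleProd m mβ tᶜ := by
  obtain ⟨ι, hι, F, A, hF, hA, hdisj, hcover, rfl⟩ := ht
  refine ⟨ι, hι, F, fun i => (A i)ᶜ, hF, fun i => (hA i).compl, hdisj, hcover, ?_⟩
  ext ⟨ω, x⟩
  have hωu : ω ∈ ⋃ i, F i := hcover ▸ Set.mem_univ ω
  rcases Set.mem_iUnion.1 hωu with ⟨i₀, hω⟩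
  simp only [Set.mem_compl_iff, mem_iUnion_prod_iff hdisj hω]

lemma IsSimpleProd.union {t s : Set (Ω' × β)} (ht : IsSimpleProd m mβ t)
    (hs : IsSimpleProd m mβ s) : IsSimpleProd m mβ (t ∪ s) := by
  obtain ⟨ι, hι, F, A, hF, hA, hdisj, hcover, rfl⟩ := ht
  obtain ⟨ι', hι', F', A', hF', hA', hdisj', hcover', rfl⟩ := hs
  refine ⟨ι × ι', @instFintypeProd _ _ hι hι', fun p => F p.1 ∩ F' p.2,
    fun p => A p.1 ∪ A' p.2, fun p => (hF p.1).inter (hF' p.2),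
    fun p => (hA p.1).union (hA' p.2), ?_, ?_, ?_⟩
  · rintro ⟨i, j⟩ ⟨i', j'⟩ hne
    rcases eq_or_ne i i' with rfl | hii
    · have hjj : j ≠ j' := by rintro rfl; exact hne rfl
      exact Set.disjoint_left.2 fun ω hω hω' =>
        Set.disjoint_left.1 (hdisj' hjj) hω.2 hω'.2
    · exact Set.disjoint_left.2 fun ω hω hω' =>
        Set.disjoint_left.1 (hdisj hii) hω.1 hω'.1
  · ext ω
    simp only [Set.mem_iUnion, Set.mem_inter_iff, Set.mem_univ, iff_true, Prod.exists]
    have h1 : ω ∈ ⋃ i, F i := hcover ▸ Set.mem_univ ω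
    have h2 : ω ∈ ⋃ i, F' i := hcover' ▸ Set.mem_univ ω
    rcases Set.mem_iUnion.1 h1 with ⟨i, hi⟩
    rcases Set.mem_iUnion.1 h2 with ⟨j, hj⟩
    exact ⟨i, j, hi, hj⟩
  · ext ⟨ω, x⟩
    constructor
    · rintro (h | h)
      · rcases Set.mem_iUnion.1 h with ⟨i, hωi, hxi⟩
        have h2 : ω ∈ ⋃ i, F' i := hcover' ▸ Set.mem_univ ω
        rcases Set.mem_iUnion.1 h2 with ⟨j, hj⟩
        exact Set.mem_iUnion.2 ⟨(i, j), ⟨⟨hωi, hj⟩, Or.inl hxi⟩⟩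
      · rcases Set.mem_iUnion.1 h with ⟨j, hωj, hxj⟩
        have h1 : ω ∈ ⋃ i, F i := hcover ▸ Set.mem_univ ω
        rcases Set.mem_iUnion.1 h1 with ⟨i, hi⟩
        exact Set.mem_iUnion.2 ⟨(i, j), ⟨⟨hi, hωj⟩, Or.inr hxj⟩⟩
    · rintro h
      rcases Set.mem_iUnion.1 h with ⟨⟨i, j⟩, ⟨hωi, hωj⟩, hx | hx⟩
      · exact Or.inl (Set.mem_iUnion.2 ⟨i, hωi, hx⟩)
      · exact Or.inr (Set.mem_iUnion.2 ⟨j, hωj, hx⟩)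

lemma isSimpleProd_biUnion {ι' : Type*} (s : Finset ι') (f : ι' → Set (Ω' × β))
    (h : ∀ i ∈ s, IsSimpleProd m mβ (f i)) : IsSimpleProd m mβ (⋃ i ∈ s, f i) := by
  classical
  induction s using Finset.induction_on with
  | empty => simpa using isSimpleProd_empty
  | insert a t hni ih =>
    rw [Finset.set_biUnion_insert]
    exact (h a (Finset.mem_insert_self a t)).union
      (ih fun i hi => h i (Finset.mem_insert_of_mem hi))

/-- Approximation of product-measurable sets by simple sets in a finite measure. -/
lemma exists_simpleProd_approx (κ : @Measure (Ω' × β) (m.prod mβ))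
    (hκ : @IsFiniteMeasure _ _ κ) {T : Set (Ω' × β)} (hT : MeasurableSet[m.prod mβ] T)
    {ε : ℝ≥0∞} (hε : 0 < ε) :
    ∃ t, IsSimpleProd m mβ t ∧ κ ((T \ t) ∪ (t \ T)) ≤ ε := by
  classical
  have hgen : m.prod mβ = MeasurableSpace.generateFrom
      (Set.image2 (fun s t => s ×ˢ t) {s | MeasurableSet[m] s} {t | MeasurableSet[mβ] t}) :=
    (@generateFrom_prod Ω' β m mβ).symm
  rw [hgen] at hT
  have key : ∀ (T : Set (Ω' × β)), MeasurableSet[MeasurableSpace.generateFrom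
      (Set.image2 (fun s t => s ×ˢ t) {s | MeasurableSet[m] s} {t | MeasurableSet[mβ] t})] T →
      ∀ ε : ℝ≥0∞, 0 < ε → ∃ t, IsSimpleProd m mβ t ∧ κ ((T \ t) ∪ (t \ T)) ≤ ε := by
    refine fun T hT => MeasurableSpace.generateFrom_induction
      (C := Set.image2 (fun s t => s ×ˢ t) {s | MeasurableSet[m] s} {t | MeasurableSet[mβ] t})
      (p := fun T _ => ∀ ε : ℝ≥0∞, 0 < ε →
        ∃ t, IsSimpleProd m mβ t ∧ κ ((T \ t) ∪ (t \ T)) ≤ ε) ?_ ?_ ?_ ?_ T hT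
    · rintro u ⟨F, hF, A, hA, rfl⟩ _ ε hε
      exact ⟨F ×ˢ A, isSimpleProd_rect hF hA, by simp⟩
    · intro ε hε
      exact ⟨∅, isSimpleProd_empty, by simp⟩
    · rintro u hu ihu ε hε
      obtain ⟨t, hts, htκ⟩ := ihu ε hε
      refine ⟨tᶜ, hts.compl, le_trans (le_of_eq ?_) htκ⟩
      have hset : (uᶜ \ tᶜ) ∪ (tᶜ \ uᶜ) = (u \ t) ∪ (t \ u) := by
        ext q; simp only [Set.mem_union, Set.mem_diff, Set.mem_compl_iff]; tauto
      rw [hset]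
    · rintro f hfm ihf ε hε
      rw [← hgen] at hfm
      set U := ⋃ i, f i with hU
      have hκfin : κ U ≠ ⊤ := @measure_ne_top _ _ κ hκ _
      have hε2 : (0:ℝ≥0∞) < ε / 2 := ENNReal.div_pos hε.ne' (by norm_num)
      have hsubM : ∀ M, MeasurableSet[m.prod mβ] (Set.accumulate f M) := fun M =>
        MeasurableSet.iUnion fun i => MeasurableSet.iUnion fun _ => hfm i
      have hMle : ∀ M, Set.accumulate f M ⊆ U := fun M => by
        intro x hx
        rcases Set.mem_iUnion.1 hx with ⟨i, hi⟩
        rcases Set.mem_iUnion.1 hi with ⟨-, hxi⟩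
        exact Set.mem_iUnion.2 ⟨i, hxi⟩
      obtain ⟨M, hM⟩ : ∃ M, κ (U \ Set.accumulate f M) ≤ ε / 2 := by
        by_cases htriv : κ U ≤ ε / 2
        · exact ⟨0, le_trans (measure_mono Set.diff_subset) htriv⟩
        push_neg at htriv
        have hε2top : ε / 2 ≠ ⊤ := ne_top_of_lt htriv
        have hacc := @tendsto_measure_iUnion_accumulate (Ω' × β) ℕ _ _ (m.prod mβ) κ f
        have hlt : κ U - ε/2 < κ U := ENNReal.sub_lt_self hκfin
          (ne_of_gt (lt_of_le_of_lt zero_le htriv)) (ne_of_gt hε2)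
        obtain ⟨M, hM⟩ := (hacc.eventually_mem (Ioi_mem_nhds hlt)).exists
        refine ⟨M, ?_⟩
        rw [measure_diff (hMle M) (hsubM M).nullMeasurableSet (measure_ne_top κ _)]
        refine tsub_le_iff_right.2 ?_
        have h2 := (ENNReal.sub_lt_iff_lt_right hε2top htriv.le).1 hM
        exact le_of_lt (h2.trans_le (le_of_eq (add_comm _ _)))
      have hε2' : (0:ℝ≥0∞) < ε / 2 / ((M:ℝ≥0∞)+1) :=
        ENNReal.div_pos hε2.ne' (by simp [ENNReal.add_eq_top])
      choose g hg1 hg2 using fun i => ihf i (ε / 2 / ((M:ℝ≥0∞)+1)) hε2'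
      set t := ⋃ i ∈ Finset.range (M+1), g i with ht
      have hts : IsSimpleProd m mβ t := isSimpleProd_biUnion _ _ fun i _ => hg1 i
      have htκ : κ ((Set.accumulate f M \ t) ∪ (t \ Set.accumulate f M)) ≤ ε / 2 := by
        have hsub : (Set.accumulate f M \ t) ∪ (t \ Set.accumulate f M) ⊆
            ⋃ i ∈ Finset.range (M+1), ((f i \ g i) ∪ (g i \ f i)) := by
          rintro q (⟨hqa, hqt⟩ | ⟨hqt, hqa⟩)
          · rcases Set.mem_iUnion.1 hqa with ⟨i, hi⟩
            rcases Set.mem_iUnion.1 hi with ⟨hiM, hqi⟩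
            refine Set.mem_biUnion (Finset.mem_range.2 (Nat.lt_succ_of_le hiM)) ?_
            exact Or.inl ⟨hqi, fun hqg => hqt (Set.mem_biUnion (Finset.mem_range.2
              (Nat.lt_succ_of_le hiM)) hqg)⟩
          · rcases Set.mem_iUnion.1 hqt with ⟨i, hi⟩
            rcases Set.mem_iUnion.1 hi with ⟨hiM, hqi⟩
            rcases Finset.mem_range.1 (by exact_mod_cast hiM) with hiM'
            refine Set.mem_biUnion hiM ?_
            refine Or.inr ⟨hqi, fun hqf => hqa ?_⟩
            exact Set.mem_iUnion.2 ⟨i, Set.mem_iUnion.2 ⟨Nat.lt_succ_iff.1 hiM', hqf⟩⟩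
        refine le_trans (measure_mono hsub) ?_
        refine le_trans (measure_biUnion_finset_le _ _) ?_
        refine le_trans (Finset.sum_le_card_nsmul _ _ (ε / 2 / ((M:ℝ≥0∞)+1))
          fun i _ => hg2 i) ?_
        rw [Finset.card_range, nsmul_eq_mul]
        push_cast
        exact ENNReal.mul_div_le
      refine ⟨t, hts, ?_⟩
      have hsub : (U \ t) ∪ (t \ U) ⊆
          (U \ Set.accumulate f M) ∪ ((Set.accumulate f M \ t) ∪ (t \ Set.accumulate f M)) := by
        rintro q (⟨hqU, hqt⟩ | ⟨hqt, hqU⟩)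
        · by_cases hqa : q ∈ Set.accumulate f M
          · exact Or.inr (Or.inl ⟨hqa, hqt⟩)
          · exact Or.inl ⟨hqU, hqa⟩
        · by_cases hqa : q ∈ Set.accumulate f M
          · exact absurd (Set.mem_iUnion.2 (by
              rcases Set.mem_iUnion₂.1 hqa with ⟨i, -, hi⟩; exact ⟨i, hi⟩)) hqU
          · exact Or.inr (Or.inr ⟨hqt, hqa⟩)
      calc κ ((U \ t) ∪ (t \ U)) ≤ κ (U \ Set.accumulate f M) +
            κ ((Set.accumulate f M \ t) ∪ (t \ Set.accumulate f M)) :=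
          le_trans (measure_mono hsub) (measure_union_le _ _)
        _ ≤ ε / 2 + ε / 2 := add_le_add hM htκ
        _ = ε := ENNReal.add_halves ε
  exact key T hT ε hε

end SimpleProd

section Star

lemma prod_le_ambient {Ω α : Type*} (m : MeasurableSpace Ω) [m0 : MeasurableSpace Ω]
    [mα : MeasurableSpace α] (hm : m ≤ m0) :
    m.prod mα ≤ @Prod.instMeasurableSpace Ω α m0 mα := by
  simp only [Prod.instMeasurableSpace, MeasurableSpace.prod]
  exact sup_le_sup (MeasurableSpace.comap_mono hm) le_rfl

/-- Key lemma: if hitting any fixed small set is `c`-rare conditionally on `m`, then hitting a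
`m`-measurable random small set is `c`-rare. -/
lemma star_lemma {Ω α : Type*} {m : MeasurableSpace Ω} [m0 : MeasurableSpace Ω]
    [mα : MeasurableSpace α] (hm : m ≤ m0)
    (P : Measure Ω) [IsProbabilityMeasure P] (ν : Measure α) [IsFiniteMeasure ν]
    {Z : Ω → α} (hZ : Measurable Z)
    {c δ η : ℝ} (hc : 0 ≤ c) (hη : 0 < η) (hηδ : η ≤ δ)
    (hbase : ∀ A : Set α, MeasurableSet[mα] A → ν A < ENNReal.ofReal δ →
      ∀ F : Set Ω, MeasurableSet[m] F → P (F ∩ Z ⁻¹' A) ≤ ENNReal.ofReal c * P F)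
    {C : Set Ω} (hC : MeasurableSet[m] C)
    {T : Set (Ω × α)} (hT : MeasurableSet[m.prod mα] T)
    (hTC : T ⊆ C ×ˢ (Set.univ : Set α))
    (hsec : ∀ ω, ν {x | (ω, x) ∈ T} ≤ ENNReal.ofReal (δ - η)) :
    P {ω | (ω, Z ω) ∈ T} ≤ ENNReal.ofReal c * P C := by
  classical
  have hple : m.prod mα ≤ @Prod.instMeasurableSpace Ω α m0 mα := prod_le_ambient m hm
  have hmap : Measurable fun ω => (ω, Z ω) := measurable_id.prodMk hZ
  set μ' : Measure (Ω × α) := P.map (fun ω => (ω, Z ω)) with hμ'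
  have hμ'P : IsProbabilityMeasure μ' := by
    rw [hμ']; exact Measure.isProbabilityMeasure_map hmap.aemeasurable
  set θ : Measure (Ω × α) := P.prod ν with hθ
  set κ : @Measure (Ω × α) (m.prod mα) := (μ' + θ).trim hple with hκdef
  have hκfin : @IsFiniteMeasure _ _ κ := by
    rw [hκdef]
    exact MeasureTheory.isFiniteMeasure_trim hple
  have hκeq : ∀ V : Set (Ω × α), MeasurableSet[m.prod mα] V → κ V = μ' V + θ V := by
    intro V hV
    rw [hκdef, MeasureTheory.trim_measurableSet_eq hple hV, Measure.add_apply]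
  have hgoal_eq : P {ω | (ω, Z ω) ∈ T} = μ' T := by
    rw [hμ', Measure.map_apply hmap (hple _ hT)]
    rfl
  rw [hgoal_eq]
  -- it suffices to prove the bound up to an arbitrary ε
  refine ENNReal.le_of_forall_pos_le_add fun εr hεr hfin => ?_
  set ε : ℝ≥0∞ := (εr : ℝ≥0∞) with hεdef
  have hε : 0 < ε := by rw [hεdef]; exact ENNReal.coe_pos.2 hεr
  have hηpos : (0:ℝ≥0∞) < ENNReal.ofReal η := ENNReal.ofReal_pos.2 hη
  set ε' : ℝ≥0∞ := min (ε/2) (ENNReal.ofReal η * (ε/2)) with hε'def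
  have hε'pos : 0 < ε' := lt_min (ENNReal.div_pos hε.ne' (by norm_num))
    (ENNReal.mul_pos hηpos.ne' (ENNReal.div_pos hε.ne' (by norm_num)).ne')
  obtain ⟨t, hts, htκ⟩ := exists_simpleProd_approx κ hκfin hT hε'pos
  obtain ⟨ι, hι, F, A, hF, hA, hdisj, hcover, htEq⟩ := hts
  haveI := hι
  have htmeas : MeasurableSet[m.prod mα] t :=
    IsSimpleProd.measurableSet ⟨ι, hι, F, A, hF, hA, hdisj, hcover, htEq⟩
  -- translate the approximation bound to μ' and θ
  have hκval : μ' ((T \ t) ∪ (t \ T)) + θ ((T \ t) ∪ (t \ T)) ≤ ε' := by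
    rw [← hκeq _ ((hT.diff htmeas).union (htmeas.diff hT))]; exact htκ
  have hμ'Tt : μ' (T \ t) ≤ ε' :=
    le_trans (le_trans (measure_mono Set.subset_union_left) le_self_add) hκval
  have hθtT : θ (t \ T) ≤ ε' :=
    le_trans (le_trans (measure_mono Set.subset_union_right) le_add_self) hκval
  -- the trimmed-to-C simple set
  set t' : Set (Ω × α) := ⋃ i, ((F i ∩ C) ×ˢ A i) with ht'
  have ht'sub : t' ⊆ t := by
    rw [htEq]; exact Set.iUnion_mono fun i => Set.prod_mono_left Set.inter_subset_left
  have hθt'T : θ (t' \ T) ≤ ε' := le_trans (measure_mono (Set.diff_subset_diff_left ht'sub)) hθtT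
  -- decomposition of μ' T
  have hTsub : T ⊆ t' ∪ (T \ t) := by
    intro q hq
    by_cases hqt : q ∈ t
    · left
      obtain ⟨ω, x⟩ := q
      have hωC : ω ∈ C := (hTC hq).1
      rw [htEq] at hqt
      rcases Set.mem_iUnion.1 hqt with ⟨i, hωi, hxi⟩
      exact Set.mem_iUnion.2 ⟨i, ⟨hωi, hωC⟩, hxi⟩
    · exact Or.inr ⟨hq, hqt⟩
  have hrectmeas : ∀ i, MeasurableSet ((F i ∩ C) ×ˢ A i) := fun i =>
    MeasurableSet.prod (hm _ ((hF i).inter hC)) (hA i)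
  have hrect : ∀ i, μ' ((F i ∩ C) ×ˢ A i) = P ((F i ∩ C) ∩ Z ⁻¹' (A i)) := by
    intro i
    have hpre : (fun ω => (ω, Z ω)) ⁻¹' ((F i ∩ C) ×ˢ A i) = (F i ∩ C) ∩ Z ⁻¹' (A i) := by
      ext ω
      simp only [Set.mem_preimage, Set.mem_prod, Set.mem_inter_iff]
    rw [hμ', Measure.map_apply hmap (hrectmeas i), hpre]
  -- split indices into good (small ν) and bad
  set good : Finset ι := Finset.univ.filter (fun i => ν (A i) < ENNReal.ofReal δ) with hgood
  set bad : Finset ι := Finset.univ.filter (fun i => ¬ ν (A i) < ENNReal.ofReal δ) with hbad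
  -- bad indices have small total P-measure
  have hbadbound : ENNReal.ofReal η * ∑ i ∈ bad, P (F i ∩ C) ≤ θ (t' \ T) := by
    have hθapply : θ (t' \ T) = ∫⁻ ω, ν (Prod.mk ω ⁻¹' (t' \ T)) ∂P := by
      rw [hθ]
      exact Measure.prod_apply (((MeasurableSet.iUnion fun i => hrectmeas i)).diff (hple _ hT))
    rw [hθapply]
    have hpt : ∀ ω, (∑ i ∈ bad, Set.indicator (F i ∩ C) (fun _ => ENNReal.ofReal η) ω)
        ≤ ν (Prod.mk ω ⁻¹' (t' \ T)) := by
      intro ω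
      by_cases hex : ∃ i ∈ bad, ω ∈ F i ∩ C
      · obtain ⟨i₀, hi₀bad, hωi₀⟩ := hex
        have hsum : (∑ i ∈ bad, Set.indicator (F i ∩ C) (fun _ => ENNReal.ofReal η) ω)
            = ENNReal.ofReal η := by
          rw [Finset.sum_eq_single_of_mem i₀ hi₀bad]
          · exact Set.indicator_of_mem hωi₀ _
          · intro j hj hne
            refine Set.indicator_of_notMem (fun hωj => ?_) _
            exact Set.disjoint_left.1 (hdisj hne) hωj.1 hωi₀.1
        rw [hsum]
        have hνbig : ENNReal.ofReal δ ≤ ν (A i₀) :=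
          not_lt.1 (Finset.mem_filter.1 hi₀bad).2
        have hsubdiff : A i₀ \ {x | (ω, x) ∈ T} ⊆ Prod.mk ω ⁻¹' (t' \ T) := by
          intro x hx
          refine ⟨Set.mem_iUnion.2 ⟨i₀, hωi₀, hx.1⟩, hx.2⟩
        refine le_trans ?_ (measure_mono hsubdiff)
        -- ofReal η ≤ ν (A i₀ \ T_ω)
        have h1 : ν (A i₀) ≤ ν (A i₀ \ {x | (ω, x) ∈ T}) + ν {x | (ω, x) ∈ T} := by
          refine le_trans (measure_mono ?_) (measure_union_le _ _)
          intro x hx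
          by_cases hxT : x ∈ {x | (ω, x) ∈ T}
          · exact Or.inr hxT
          · exact Or.inl ⟨hx, hxT⟩
        have h2 : ENNReal.ofReal δ ≤ ν (A i₀ \ {x | (ω, x) ∈ T}) + ENNReal.ofReal (δ - η) :=
          le_trans hνbig (le_trans h1 (add_le_add_right (hsec ω) _))
        have h3 : ENNReal.ofReal δ = ENNReal.ofReal η + ENNReal.ofReal (δ - η) := by
          rw [← ENNReal.ofReal_add hη.le (by linarith)]
          congr 1; linarith
        rw [h3] at h2
        exact (ENNReal.add_le_add_iff_right ENNReal.ofReal_ne_top).1 h2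
      · push_neg at hex
        have : (∑ i ∈ bad, Set.indicator (F i ∩ C) (fun _ => ENNReal.ofReal η) ω) = 0 :=
          Finset.sum_eq_zero fun i hi => Set.indicator_of_notMem (hex i hi) _
        rw [this]; exact zero_le
    calc ENNReal.ofReal η * ∑ i ∈ bad, P (F i ∩ C)
        = ∑ i ∈ bad, ∫⁻ ω, Set.indicator (F i ∩ C) (fun _ => ENNReal.ofReal η) ω ∂P := by
          rw [Finset.mul_sum]
          refine Finset.sum_congr rfl fun i _ => ?_
          rw [lintegral_indicator (hm _ ((hF i).inter hC))]
          simp [lintegral_const]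
      _ = ∫⁻ ω, (∑ i ∈ bad, Set.indicator (F i ∩ C) (fun _ => ENNReal.ofReal η) ω) ∂P := by
          rw [← lintegral_finset_sum]
          exact fun i _ => measurable_const.indicator (hm _ ((hF i).inter hC))
      _ ≤ ∫⁻ ω, ν (Prod.mk ω ⁻¹' (t' \ T)) ∂P := lintegral_mono hpt
  have hbadsum : ∑ i ∈ bad, P (F i ∩ C) ≤ ε / 2 := by
    have h1 : ENNReal.ofReal η * ∑ i ∈ bad, P (F i ∩ C) ≤
        ENNReal.ofReal η * (ε / 2) := le_trans hbadbound (le_trans hθt'T (min_le_right _ _))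
    exact (ENNReal.mul_le_mul_iff_right hηpos.ne' ENNReal.ofReal_ne_top).1 h1
  -- good indices
  have hgoodsum : ∑ i ∈ good, P ((F i ∩ C) ∩ Z ⁻¹' (A i)) ≤ ENNReal.ofReal c * P C := by
    calc ∑ i ∈ good, P ((F i ∩ C) ∩ Z ⁻¹' (A i))
        ≤ ∑ i ∈ good, ENNReal.ofReal c * P (F i ∩ C) := by
          refine Finset.sum_le_sum fun i hi => ?_
          exact hbase (A i) (hA i) (Finset.mem_filter.1 hi).2 _ ((hF i).inter hC)
      _ = ENNReal.ofReal c * ∑ i ∈ good, P (F i ∩ C) := (Finset.mul_sum _ _ _).symm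
      _ ≤ ENNReal.ofReal c * P C := by
          refine mul_le_mul_right ?_ _
          rw [← measure_biUnion_finset ?_ (fun i _ => hm _ ((hF i).inter hC))]
          · exact measure_mono (Set.iUnion₂_subset fun i _ => Set.inter_subset_right)
          · intro i hi j hj hij
            exact Set.disjoint_left.2 fun ω hω hω' =>
              Set.disjoint_left.1 (hdisj hij) hω.1 hω'.1
  -- assemble
  have hμt' : μ' t' ≤ ENNReal.ofReal c * P C + ε / 2 := by
    calc μ' t' ≤ ∑' i, μ' ((F i ∩ C) ×ˢ A i) := measure_iUnion_le _
      _ = ∑ i, μ' ((F i ∩ C) ×ˢ A i) := tsum_fintype _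
      _ = ∑ i, P ((F i ∩ C) ∩ Z ⁻¹' (A i)) := Finset.sum_congr rfl fun i _ => hrect i
      _ = (∑ i ∈ good, P ((F i ∩ C) ∩ Z ⁻¹' (A i)))
          + ∑ i ∈ bad, P ((F i ∩ C) ∩ Z ⁻¹' (A i)) :=
          (Finset.sum_filter_add_sum_filter_not _ _ _).symm
      _ ≤ ENNReal.ofReal c * P C + ε / 2 := by
          refine add_le_add hgoodsum (le_trans ?_ hbadsum)
          exact Finset.sum_le_sum fun i _ => measure_mono Set.inter_subset_left
  calc μ' T ≤ μ' t' + μ' (T \ t) := le_trans (measure_mono hTsub) (measure_union_le _ _)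
    _ ≤ (ENNReal.ofReal c * P C + ε / 2) + ε / 2 :=
        add_le_add hμt' (le_trans hμ'Tt (min_le_left _ _))
    _ = ENNReal.ofReal c * P C + ε := by rw [add_assoc, ENNReal.add_halves]

end Star

lemma step1_lemma {Ω α : Type*} {m : MeasurableSpace Ω} [m0 : MeasurableSpace Ω]
    [mα : MeasurableSpace α] (hm : m ≤ m0)
    (P : Measure Ω) [IsProbabilityMeasure P] (ν : Measure α) [IsFiniteMeasure ν]
    {Z : Ω → α} (hZ : Measurable Z)
    {c δ η : ℝ} (hc : 0 ≤ c) (hη : 0 < η) (hηδ : η ≤ δ)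
    (hbase : ∀ A : Set α, MeasurableSet[mα] A → ν A < ENNReal.ofReal δ →
      ∀ F : Set Ω, MeasurableSet[m] F → P (F ∩ Z ⁻¹' A) ≤ ENNReal.ofReal c * P F)
    {S : Set (Ω × α)} (hS : MeasurableSet[m.prod mα] S) :
    ∀ᵐ ω ∂P, ν {x | (ω, x) ∈ S} ≤ ENNReal.ofReal (δ - η) →
      (P[Set.indicator {ω' | (ω', Z ω') ∈ S} (fun _ => (1:ℝ)) | m]) ω ≤ c := by
  haveI : IsFiniteMeasure (P.trim hm) := isFiniteMeasure_trim hm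
  set E : Set Ω := {ω' | (ω', Z ω') ∈ S} with hE
  have hEmeas : MeasurableSet E := (measurable_id.prodMk hZ) (prod_le_ambient m hm _ hS)
  set Y : Ω → ℝ := E.indicator (fun _ => (1:ℝ)) with hY
  have hYint : Integrable Y P := (integrable_const 1).indicator hEmeas
  set G : Ω → ℝ := P[Y | m] with hG
  have hGsm : StronglyMeasurable[m] G := stronglyMeasurable_condExp
  have hsecmeas : Measurable[m] (fun ω => ν (Prod.mk ω ⁻¹' S)) :=
    @measurable_measure_prodMk_left Ω α m mα ν _ S hS
  set B : Set Ω := {ω | ν {x | (ω, x) ∈ S} ≤ ENNReal.ofReal (δ - η)} with hB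
  have hBmeas : MeasurableSet[m] B := hsecmeas measurableSet_Iic
  have key : ∀ k : ℕ, P (B ∩ {ω | c + 1/((k:ℝ)+1) ≤ G ω}) = 0 := by
    intro k
    set Ck : Set Ω := B ∩ {ω | c + 1/((k:ℝ)+1) ≤ G ω} with hCk
    have hCkmeas : MeasurableSet[m] Ck :=
      hBmeas.inter (hGsm.measurable measurableSet_Ici)
    set T : Set (Ω × α) := S ∩ (Ck ×ˢ (Set.univ : Set α)) with hT
    have hTmeas : MeasurableSet[m.prod mα] T :=
      hS.inter (MeasurableSet.prod hCkmeas MeasurableSet.univ)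
    have hTC : T ⊆ Ck ×ˢ (Set.univ : Set α) := Set.inter_subset_right
    have hsec' : ∀ ω, ν {x | (ω, x) ∈ T} ≤ ENNReal.ofReal (δ - η) := by
      intro ω
      by_cases hω : ω ∈ Ck
      · exact le_trans (measure_mono fun x hx => hx.1) hω.1
      · have hempty : {x | (ω, x) ∈ T} = ∅ := by
          ext x; simp only [Set.mem_setOf_eq, Set.mem_empty_iff_false, iff_false]
          rintro ⟨-, hc', -⟩; exact hω hc'
        rw [hempty]; simp
    have hstar := star_lemma hm P ν hZ hc hη hηδ hbase hCkmeas hTmeas hTC hsec'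
    have hET : {ω | (ω, Z ω) ∈ T} = E ∩ Ck := by
      ext ω
      simp only [hT, Set.mem_setOf_eq, Set.mem_inter_iff, Set.mem_prod, Set.mem_univ, and_true]
      exact Iff.rfl
    rw [hET] at hstar
    have hupper : ∫ ω in Ck, G ω ∂P ≤ c * (P Ck).toReal := by
      have h1 : ∫ ω in Ck, G ω ∂P = ∫ ω in Ck, Y ω ∂P :=
        setIntegral_condExp hm hYint hCkmeas
      have h2 : ∫ ω in Ck, Y ω ∂P = (P (E ∩ Ck)).toReal := by
        rw [hY]
        rw [MeasureTheory.integral_indicator_const (1:ℝ) hEmeas]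
        rw [measureReal_restrict_apply hEmeas]
        simp [Measure.real]
      rw [h1, h2]
      calc (P (E ∩ Ck)).toReal ≤ (ENNReal.ofReal c * P Ck).toReal :=
            ENNReal.toReal_mono (ENNReal.mul_ne_top ENNReal.ofReal_ne_top
              (measure_ne_top P _)) hstar
        _ = c * (P Ck).toReal := by rw [ENNReal.toReal_mul, ENNReal.toReal_ofReal hc]
    have hlower : (c + 1/((k:ℝ)+1)) * (P Ck).toReal ≤ ∫ ω in Ck, G ω ∂P := by
      refine MeasureTheory.setIntegral_ge_of_const_le_real (hm _ hCkmeas) (measure_ne_top P _)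
        (fun ω hω => hω.2) (integrable_condExp.integrableOn)
    have hx : (0:ℝ) ≤ (P Ck).toReal := ENNReal.toReal_nonneg
    have hk : (0:ℝ) < 1/((k:ℝ)+1) := by positivity
    have hzero : (P Ck).toReal = 0 := by nlinarith [le_trans hlower hupper]
    rcases (ENNReal.toReal_eq_zero_iff _).1 hzero with h | h
    · exact h
    · exact absurd h (measure_ne_top P _)
  have hae : ∀ᵐ ω ∂P, ∀ k : ℕ, ω ∉ B ∩ {ω | c + 1/((k:ℝ)+1) ≤ G ω} := by
    rw [ae_all_iff]
    intro k
    rw [ae_iff]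
    simpa only [not_not, Set.setOf_mem_eq] using key k
  filter_upwards [hae] with ω hω hωB
  by_contra hcon
  push_neg at hcon
  obtain ⟨k, hk⟩ := exists_nat_one_div_lt (sub_pos.2 hcon)
  exact hω k ⟨hωB, show c + 1/((k:ℝ)+1) ≤ G ω by linarith⟩

/-- Strong law of large numbers for bounded martingale difference sequences. -/
lemma slln_mds {Ω : Type*} [m0 : MeasurableSpace Ω] (P : Measure Ω) [IsProbabilityMeasure P]
    (𝔉 : ℕ → MeasurableSpace Ω) (h𝔉 : ∀ k, 𝔉 k ≤ m0)
    (D : ℕ → Ω → ℝ)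
    (hadp : ∀ p q : ℕ, 1 ≤ p → p < q → StronglyMeasurable[𝔉 (q-1)] (D p))
    (hbdd : ∀ n, 1 ≤ n → ∀ᵐ ω ∂P, |D n ω| ≤ 1)
    (hcond : ∀ n, 1 ≤ n → P[D n | 𝔉 (n-1)] =ᵐ[P] 0) :
    ∀ᵐ ω ∂P, Tendsto (fun N : ℕ => (∑ n ∈ Finset.Icc 1 N, D n ω) / N) atTop (nhds 0) := by
  classical
  have hsm : ∀ n, 1 ≤ n → StronglyMeasurable (D n) := fun n hn =>
    (hadp n (n+1) hn (Nat.lt_succ_self n)).mono (by simpa using h𝔉 n)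
  have hint : ∀ n, 1 ≤ n → Integrable (D n) P := by
    intro n hn
    refine Integrable.mono' (integrable_const 1) (hsm n hn).aestronglyMeasurable ?_
    filter_upwards [hbdd n hn] with ω h
    simpa [Real.norm_eq_abs] using h
  have hprod_int : ∀ p q, 1 ≤ p → 1 ≤ q → Integrable (D p * D q) P := by
    intro p q hp hq
    refine Integrable.mono' (integrable_const 1)
      ((hsm p hp).mul (hsm q hq)).aestronglyMeasurable ?_
    filter_upwards [hbdd p hp, hbdd q hq] with ω h1 h2
    rw [Pi.mul_apply, Real.norm_eq_abs, abs_mul]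
    nlinarith [abs_nonneg (D p ω), abs_nonneg (D q ω)]
  have horth : ∀ p q, 1 ≤ p → p < q → ∫ ω, D p ω * D q ω ∂P = 0 := by
    intro p q hp hpq
    have hq1 : 1 ≤ q := hp.trans hpq.le
    haveI : IsFiniteMeasure (P.trim (h𝔉 (q-1))) := isFiniteMeasure_trim _
    have hpull : P[D p * D q | 𝔉 (q-1)] =ᵐ[P] D p * P[D q | 𝔉 (q-1)] :=
      condExp_mul_of_stronglyMeasurable_left (hadp p q hp hpq) (hprod_int p q hp hq1) (hint q hq1)
    have h1 : ∫ ω, D p ω * D q ω ∂P = ∫ ω, (P[D p * D q | 𝔉 (q-1)]) ω ∂P :=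
      (integral_condExp (h𝔉 (q-1))).symm
    rw [h1, integral_congr_ae hpull]
    have hz : (D p * P[D q | 𝔉 (q-1)]) =ᵐ[P] fun _ => (0:ℝ) := by
      filter_upwards [hcond q hq1] with ω h
      simp only [Pi.mul_apply]
      rw [h]
      simp
    rw [integral_congr_ae hz, integral_zero]
  set M : ℕ → Ω → ℝ := fun N ω => ∑ n ∈ Finset.Icc 1 N, D n ω with hM
  have hDall : ∀ᵐ ω ∂P, ∀ n, 1 ≤ n → |D n ω| ≤ 1 := by
    rw [ae_all_iff]
    intro n
    by_cases hn : 1 ≤ n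
    · filter_upwards [hbdd n hn] with ω h _; exact h
    · filter_upwards with ω h; exact absurd h hn
  have hMmeas : ∀ N, Measurable (M N) := fun N =>
    Finset.measurable_sum _ fun n hn => (hsm n (Finset.mem_Icc.1 hn).1).measurable
  have hM2int : ∀ N : ℕ, Integrable (fun ω => M N ω ^ 2) P := by
    intro N
    refine Integrable.mono' (integrable_const ((N:ℝ)^2))
      ((hMmeas N).pow_const 2).aestronglyMeasurable ?_
    filter_upwards [hDall] with ω hω
    have h1 : |M N ω| ≤ (N:ℝ) := by
      refine le_trans (Finset.abs_sum_le_sum_abs _ _) ?_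
      calc ∑ n ∈ Finset.Icc 1 N, |D n ω| ≤ ∑ n ∈ Finset.Icc 1 N, 1 :=
            Finset.sum_le_sum fun n hn => hω n (Finset.mem_Icc.1 hn).1
        _ = ((Finset.Icc 1 N).card : ℝ) := by simp
        _ ≤ (N:ℝ) := by rw [Nat.card_Icc]; simp
    rw [Real.norm_eq_abs, abs_pow]
    exact pow_le_pow_left₀ (abs_nonneg _) h1 2
  have hvar : ∀ N : ℕ, ∫ ω, M N ω ^ 2 ∂P ≤ (N:ℝ) := by
    intro N
    have hexp : (fun ω => M N ω ^ 2) =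
        fun ω => ∑ p ∈ Finset.Icc 1 N, ∑ q ∈ Finset.Icc 1 N, D p ω * D q ω := by
      funext ω
      rw [hM, sq, Finset.sum_mul_sum]
    rw [hexp]
    rw [integral_finset_sum (f := fun p ω => ∑ q ∈ Finset.Icc 1 N, D p ω * D q ω) _
      (fun p hp => integrable_finset_sum (f := fun q ω => D p ω * D q ω) _
      (fun q hq => hprod_int p q (Finset.mem_Icc.1 hp).1 (Finset.mem_Icc.1 hq).1))]
    have hinner : ∀ p ∈ Finset.Icc 1 N,
        (∫ ω, ∑ q ∈ Finset.Icc 1 N, D p ω * D q ω ∂P) ≤ 1 := by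
      intro p hp
      have hp1 : 1 ≤ p := (Finset.mem_Icc.1 hp).1
      rw [integral_finset_sum (f := fun q ω => D p ω * D q ω) _
        (fun q hq => hprod_int p q hp1 (Finset.mem_Icc.1 hq).1)]
      rw [Finset.sum_eq_single_of_mem p hp]
      · refine integral_mono_ae (hprod_int p p hp1 hp1) (integrable_const 1) ?_ |>.trans ?_
        · filter_upwards [hbdd p hp1] with ω h
          show D p ω * D p ω ≤ 1
          nlinarith [abs_le.1 h]
        · simp
      · intro q hq hqp
        have hq1 : 1 ≤ q := (Finset.mem_Icc.1 hq).1
        rcases lt_or_gt_of_ne hqp with hlt | hgt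
        · have hcomm : (fun ω => D p ω * D q ω) = fun ω => D q ω * D p ω :=
            funext fun ω => mul_comm _ _
          calc ∫ ω, D p ω * D q ω ∂P = ∫ ω, D q ω * D p ω ∂P := by rw [hcomm]
            _ = 0 := horth q p hq1 hlt
        · exact horth p q hp1 hgt
    calc ∑ p ∈ Finset.Icc 1 N, ∫ ω, ∑ q ∈ Finset.Icc 1 N, D p ω * D q ω ∂P
        ≤ ∑ p ∈ Finset.Icc 1 N, 1 := Finset.sum_le_sum hinner
      _ ≤ (N:ℝ) := by rw [Finset.sum_const, Nat.card_Icc]; simp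
  have hcheb : ∀ a : ℝ, 0 < a → ∀ N : ℕ,
      P {ω | a ≤ |M N ω|} ≤ ENNReal.ofReal ((N:ℝ) / a^2) := by
    intro a ha N
    have hkey := mul_meas_ge_le_integral_of_nonneg
      (μ := P) (f := fun ω => M N ω ^ 2) (ae_of_all _ fun ω => sq_nonneg _) (hM2int N) (a^2)
    have hsub : {ω | a ≤ |M N ω|} ⊆ {ω | a^2 ≤ M N ω ^ 2} := by
      intro ω h
      have h2 : a^2 ≤ |M N ω|^2 := pow_le_pow_left₀ ha.le h 2
      simpa [sq_abs] using h2
    have hmono := ENNReal.toReal_mono (measure_ne_top P _) (measure_mono hsub)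
    have ha2 : (0:ℝ) < a^2 := by positivity
    have h1 : (P {ω | a ≤ |M N ω|}).toReal ≤ (N:ℝ)/a^2 := by
      rw [le_div_iff₀ ha2]
      have hkey' : a ^ 2 * (P {ω | a ^ 2 ≤ M N ω ^ 2}).toReal ≤ ∫ x, M N x ^ 2 ∂P := hkey
      nlinarith [hvar N, ENNReal.toReal_nonneg (a := P {ω | a ≤ |M N ω|}), hkey',
        mul_le_mul_of_nonneg_left hmono ha2.le]
    calc P {ω | a ≤ |M N ω|}
        = ENNReal.ofReal ((P {ω | a ≤ |M N ω|}).toReal) :=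
          (ENNReal.ofReal_toReal (measure_ne_top P _)).symm
      _ ≤ ENNReal.ofReal ((N:ℝ)/a^2) := ENNReal.ofReal_le_ofReal h1
  have hBC : ∀ j : ℕ, ∀ᵐ ω ∂P, ∀ᶠ k in atTop,
      |M ((k+1)^2) ω| < (((k+1)^2 : ℕ):ℝ) / ((j:ℝ)+1) := by
    intro j
    have hae := ae_eventually_notMem (μ := P)
      (s := fun k => {ω | (((k+1)^2 : ℕ):ℝ) / ((j:ℝ)+1) ≤ |M ((k+1)^2) ω|}) ?_
    · filter_upwards [hae] with ω hω
      filter_upwards [hω] with k hk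
      exact not_le.1 hk
    · -- summability
      have hone : ∀ k : ℕ, P {ω | (((k+1)^2 : ℕ):ℝ) / ((j:ℝ)+1) ≤ |M ((k+1)^2) ω|} ≤
          ENNReal.ofReal (((j:ℝ)+1)^2 / ((k:ℝ)+1)^2) := by
        intro k
        have hcast : (((k+1)^2 : ℕ):ℝ) = ((k:ℝ)+1)^2 := by push_cast; ring
        have ha : (0:ℝ) < (((k+1)^2 : ℕ):ℝ) / ((j:ℝ)+1) := by
          rw [hcast]; positivity
        refine le_trans (hcheb _ ha ((k+1)^2)) (ENNReal.ofReal_le_ofReal ?_)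
        rw [hcast]
        have heq : ((k:ℝ)+1)^2 / ((((k:ℝ)+1)^2/((j:ℝ)+1))^2)
            = ((j:ℝ)+1)^2/(((k:ℝ)+1)^2) := by
          field_simp
        rw [heq]
      have hsummable : Summable (fun k : ℕ => ((j:ℝ)+1)^2 / ((k:ℝ)+1)^2) := by
        have h0 : Summable (fun n : ℕ => 1/(n:ℝ)^2) :=
          Real.summable_one_div_nat_pow.2 (by norm_num)
        have h1 : Summable (fun k : ℕ => 1/((k:ℝ)+1)^2) := by
          have := (summable_nat_add_iff 1).2 h0
          refine this.congr fun k => ?_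
          push_cast; ring
        have := h1.mul_left (((j:ℝ)+1)^2)
        refine this.congr fun k => ?_
        field_simp
      refine ne_top_of_le_ne_top ?_ (ENNReal.tsum_le_tsum hone)
      rw [← ENNReal.ofReal_tsum_of_nonneg (fun k => by positivity) hsummable]
      exact ENNReal.ofReal_ne_top
  have hBCall : ∀ᵐ ω ∂P, ∀ j : ℕ, ∀ᶠ k in atTop,
      |M ((k+1)^2) ω| < (((k+1)^2 : ℕ):ℝ) / ((j:ℝ)+1) := ae_all_iff.2 hBC
  filter_upwards [hBCall, hDall] with ω hMω hDω
  rw [Metric.tendsto_atTop]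
  intro ε hε
  -- choose j with 4/(j+1) < ε
  obtain ⟨j, hj⟩ := exists_nat_gt (4/ε)
  have hj4 : 4/((j:ℝ)+1) < ε := by
    rw [div_lt_iff₀ (by positivity)]
    have h4 : (0:ℝ) < 4 := by norm_num
    have hjpos : (0:ℝ) < (j:ℝ) := lt_of_le_of_lt (by positivity) hj
    calc (4:ℝ) = ε * (4/ε) := by field_simp
      _ < ε * ((j:ℝ)+1) := by
          refine mul_lt_mul_of_pos_left ?_ hε
          linarith
  obtain ⟨K₀, hK₀⟩ := eventually_atTop.1 (hMω j)
  set m₁ : ℕ := max (K₀ + 1) (max (j+1) 1) with hm₁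
  refine ⟨m₁ * m₁, fun N hN => ?_⟩
  set k : ℕ := Nat.sqrt N with hk
  have hm₁k : m₁ ≤ k := Nat.le_sqrt.2 (le_trans le_rfl hN)
  have h1m : (1:ℕ) ≤ m₁ := le_trans (le_max_right (j+1) 1) (le_max_right (K₀+1) _)
  have hjm : j + 1 ≤ m₁ := le_trans (le_max_left (j+1) 1) (le_max_right (K₀+1) _)
  have hKm : K₀ + 1 ≤ m₁ := le_max_left _ _
  have hk1 : 1 ≤ k := le_trans h1m hm₁k
  have hkj : j + 1 ≤ k := le_trans hjm hm₁k
  have hkK : K₀ + 1 ≤ k := le_trans hKm hm₁k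
  have hk2N : k^2 ≤ N := Nat.sqrt_le' N
  have hNk2 : N < (k+1)^2 := Nat.lt_succ_sqrt' N
  have hNpos : 0 < N := lt_of_lt_of_le (by positivity) hN
  -- bound |M (k^2) ω|
  have hMk : |M (k^2) ω| < ((k:ℝ))^2 / ((j:ℝ)+1) := by
    have := hK₀ (k-1) (by omega)
    have hkk : (k-1)+1 = k := by omega
    rw [hkk] at this
    have hcast : (((k)^2 : ℕ):ℝ) = ((k:ℝ))^2 := by push_cast; ring
    rw [hcast] at this
    exact this
  -- bound the increment
  have hsplit : M N ω = M (k^2) ω + ∑ n ∈ Finset.Ioc (k^2) N, D n ω := by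
    rw [hM]
    simp only
    rw [show Finset.Icc 1 N = Finset.Ioc 0 N from (Finset.Icc_add_one_left_eq_Ioc 0 N),
        show Finset.Icc 1 (k^2) = Finset.Ioc 0 (k^2) from (Finset.Icc_add_one_left_eq_Ioc 0 (k^2))]
    exact (Finset.sum_Ioc_consecutive _ (Nat.zero_le _) hk2N).symm
  have hincr : |∑ n ∈ Finset.Ioc (k^2) N, D n ω| ≤ ((N - k^2 : ℕ):ℝ) := by
    refine le_trans (Finset.abs_sum_le_sum_abs _ _) ?_
    calc ∑ n ∈ Finset.Ioc (k^2) N, |D n ω| ≤ ∑ n ∈ Finset.Ioc (k^2) N, 1 :=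
          Finset.sum_le_sum fun n hn => hDω n (by
            have := (Finset.mem_Ioc.1 hn).1; omega)
      _ = ((Finset.Ioc (k^2) N).card : ℝ) := by simp
      _ = ((N - k^2 : ℕ):ℝ) := by rw [Nat.card_Ioc]
  have hdiff2k : ((N - k^2 : ℕ):ℝ) ≤ 2*(k:ℝ) := by
    have h1 : N - k^2 ≤ 2*k := by
      have hsq : k^2 = k*k := sq k
      have hexp2 : (k+1)^2 = k*k+2*k+1 := by ring
      omega
    calc ((N - k^2 : ℕ):ℝ) ≤ ((2*k : ℕ):ℝ) := by exact_mod_cast h1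
      _ = 2*(k:ℝ) := by push_cast; ring
  -- assemble
  have hKpos : (0:ℝ) < (k:ℝ) := by exact_mod_cast hk1
  have hNR : (0:ℝ) < (N:ℝ) := by exact_mod_cast hNpos
  have hK2N : ((k:ℝ))^2 ≤ (N:ℝ) := by exact_mod_cast hk2N
  have hMNbound : |M N ω| ≤ ((k:ℝ))^2/((j:ℝ)+1) + 2*(k:ℝ) := by
    calc |M N ω| ≤ |M (k^2) ω| + |∑ n ∈ Finset.Ioc (k^2) N, D n ω| := by
          rw [hsplit]; exact abs_add_le _ _
      _ ≤ ((k:ℝ))^2/((j:ℝ)+1) + 2*(k:ℝ) :=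
          add_le_add hMk.le (le_trans hincr hdiff2k)
  rw [Real.dist_eq, sub_zero, abs_div, Nat.abs_cast]
  have hchain : |M N ω| / (N:ℝ) ≤ 1/((j:ℝ)+1) + 2/(k:ℝ) := by
    calc |M N ω| / (N:ℝ) ≤ |M N ω| / ((k:ℝ))^2 := by gcongr
      _ ≤ (((k:ℝ))^2/((j:ℝ)+1) + 2*(k:ℝ)) / ((k:ℝ))^2 := by gcongr
      _ = 1/((j:ℝ)+1) + 2/(k:ℝ) := by field_simp
  have hkjR : ((j:ℝ)+1) ≤ (k:ℝ) := by exact_mod_cast hkj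
  calc |M N ω| / (N:ℝ) ≤ 1/((j:ℝ)+1) + 2/(k:ℝ) := hchain
    _ ≤ 1/((j:ℝ)+1) + 2/((j:ℝ)+1) := by gcongr
    _ = 3/((j:ℝ)+1) := by ring
    _ ≤ 4/((j:ℝ)+1) := by gcongr <;> norm_num
    _ < ε := hj4

/-- Time-averaged behavior of uniformly dominated processes: if `X` is
uniformly dominated by `ν` at rate `ε` and `(A n)` is a predictable sequence of random
measurable sets whose masses satisfy `limsup ν (A n) < δ` a.s., then the asymptotic rate
at which `X n ∈ A n` is at most `ε δ` almost surely. -/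
theorem uniformly_dominated_predictable_hit_rate
    {Ω α : Type*} [MeasurableSpace Ω] [MetricSpace α] [MeasurableSpace α] [BorelSpace α]
    (P : Measure Ω) [IsProbabilityMeasure P] (ν : Measure α) [IsFiniteMeasure ν]
    (X : ℕ → Ω → α) (hX : ∀ n, Measurable (X n))
    (ε : ℝ → ℝ) (hεpos : ∀ δ : ℝ, 0 < δ → 0 < ε δ)
    (hud : UniformlyDominatedAtRate P X ν ε)
    (δ : ℝ) (hδ : 0 < δ) (A : ℕ → Ω → Set α)
    (hpred : ∀ n, 1 ≤ n →
      MeasurableSet[(natFilt X (n - 1)).prod (inferInstance : MeasurableSpace α)]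
        {q : Ω × α | q.2 ∈ A n q.1})
    (hsmall : ∀ᵐ ω ∂P, Filter.limsup (fun n : ℕ => ν (A n ω)) atTop < ENNReal.ofReal δ) :
    ∀ᵐ ω ∂P, Filter.limsup (fun N : ℕ =>
      (∑ n ∈ Finset.Icc 1 N, (A n ω).indicator (fun _ => (1 : ℝ)) (X n ω)) / N) atTop
      ≤ ε δ := by
    classical
  set c : ℝ := ε δ with hcdef
  have hc : 0 < c := hεpos δ hδ
  -- filtration facts
  have hFle : ∀ k, natFilt X k ≤ ‹MeasurableSpace Ω› := by
    intro k
    exact iSup₂_le fun i _ => (hX i).comap_le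
  have hFmono : ∀ a b, a ≤ b → natFilt X a ≤ natFilt X b := by
    intro a b hab
    exact iSup₂_le fun i hi => le_iSup₂ (f := fun m (_ : m ∈ Set.Icc 1 b) =>
      MeasurableSpace.comap (X m) inferInstance) i ⟨hi.1, hi.2.trans hab⟩
  have hXF : ∀ i k, 1 ≤ i → i ≤ k → Measurable[natFilt X k] (X i) := by
    intro i k h1 hk
    exact Measurable.of_comap_le (le_iSup₂ (f := fun m (_ : m ∈ Set.Icc 1 k) =>
      MeasurableSpace.comap (X m) inferInstance) i ⟨h1, hk⟩)
  set S : ℕ → Set (Ω × α) := fun n => {q : Ω × α | q.2 ∈ A n q.1} with hS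
  have hSmeas : ∀ n, 1 ≤ n → MeasurableSet[(natFilt X (n-1)).prod
      (inferInstance : MeasurableSpace α)] (S n) := fun n hn => hpred n hn
  set E : ℕ → Set Ω := fun n => {ω' | (ω', X n ω') ∈ S n} with hE
  have hEmeas : ∀ n, 1 ≤ n → MeasurableSet (E n) := fun n hn =>
    (measurable_id.prodMk (hX n)) (prod_le_ambient _ (hFle (n-1)) _ (hSmeas n hn))
  set Y : ℕ → Ω → ℝ := fun n => Set.indicator (E n) (fun _ => (1:ℝ)) with hYdef
  have hYeq : ∀ n, (fun ω => (A n ω).indicator (fun _ => (1:ℝ)) (X n ω)) = Y n := by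
    intro n
    funext ω
    simp [hYdef, hE, hS, Set.indicator_apply]
  have hYint : ∀ n, 1 ≤ n → Integrable (Y n) P := fun n hn =>
    (integrable_const 1).indicator (hEmeas n hn)
  have hY01 : ∀ n ω, 0 ≤ Y n ω ∧ Y n ω ≤ 1 := by
    intro n ω
    simp only [hYdef, Set.indicator_apply]
    split_ifs <;> norm_num
  set G : ℕ → Ω → ℝ := fun n => P[Y n | natFilt X (n-1)] with hGdef
  -- base domination property
  have hbase : ∀ n, 1 ≤ n → ∀ B : Set α, MeasurableSet B → ν B < ENNReal.ofReal δ →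
      ∀ F : Set Ω, MeasurableSet[natFilt X (n-1)] F →
      P (F ∩ X n ⁻¹' B) ≤ ENNReal.ofReal c * P F := by
    intro n hn B hB hν F hF
    haveI : IsFiniteMeasure (P.trim (hFle (n-1))) := isFiniteMeasure_trim _
    have hudh := hud δ hδ B hB hν
    set f : Ω → ℝ := fun ω' => B.indicator (fun _ => (1:ℝ)) (X n ω') with hfdef
    have hfeq : f = (X n ⁻¹' B).indicator (fun _ => (1:ℝ)) := by
      funext ω
      simp [hfdef, Set.indicator_apply]
    have hfint : Integrable f P := by
      rw [hfeq]; exact (integrable_const 1).indicator (hX n hB)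
    have hreal : (P (F ∩ X n ⁻¹' B)).toReal ≤ c * (P F).toReal := by
      have h1 : (P (F ∩ X n ⁻¹' B)).toReal = ∫ ω in F, f ω ∂P := by
        rw [hfeq, MeasureTheory.integral_indicator_const (1:ℝ) (hX n hB),
          measureReal_restrict_apply (hX n hB)]
        rw [Set.inter_comm]
        simp [Measure.real]
      have h2 : ∫ ω in F, f ω ∂P = ∫ ω in F, (P[f | natFilt X (n-1)]) ω ∂P :=
        (setIntegral_condExp (hFle (n-1)) hfint hF).symm
      rw [h1, h2]
      refine le_trans (setIntegral_mono_ae integrable_condExp.integrableOn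
        (integrable_const c).integrableOn ?_) ?_
      · filter_upwards [hudh] with ω hω
        exact (hω n hn).le
      · rw [setIntegral_const]
        rw [smul_eq_mul, mul_comm]
        exact le_rfl
    calc P (F ∩ X n ⁻¹' B) = ENNReal.ofReal ((P (F ∩ X n ⁻¹' B)).toReal) :=
          (ENNReal.ofReal_toReal (measure_ne_top P _)).symm
      _ ≤ ENNReal.ofReal (c * (P F).toReal) := ENNReal.ofReal_le_ofReal hreal
      _ = ENNReal.ofReal c * ENNReal.ofReal ((P F).toReal) := ENNReal.ofReal_mul hc.le
      _ = ENNReal.ofReal c * P F := by rw [ENNReal.ofReal_toReal (measure_ne_top P _)]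
  -- step 1: a.e. conditional bounds for the predictable sets
  have hstep1 : ∀ᵐ ω ∂P, ∀ n j : ℕ, 1 ≤ n → 1/((j:ℝ)+1) ≤ δ →
      (ν (A n ω) ≤ ENNReal.ofReal (δ - 1/((j:ℝ)+1)) → G n ω ≤ c) := by
    rw [ae_all_iff]
    intro n
    rw [ae_all_iff]
    intro j
    by_cases hn : 1 ≤ n
    · by_cases hjδ : 1/((j:ℝ)+1) ≤ δ
      · have hkey := step1_lemma (hFle (n-1)) P ν (hX n) hc.le
          (by positivity : (0:ℝ) < 1/((j:ℝ)+1)) hjδ (hbase n hn) (hSmeas n hn)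
        filter_upwards [hkey] with ω hω _ _ hν
        refine hω ?_
        have : {x | (ω, x) ∈ S n} = A n ω := Set.setOf_mem_eq
        rw [this]
        exact hν
      · filter_upwards with ω _ h; exact absurd h hjδ
    · filter_upwards with ω h; exact absurd h hn
  -- G is in [0,1] a.e.
  have hG01 : ∀ᵐ ω ∂P, ∀ n, 1 ≤ n → 0 ≤ G n ω ∧ G n ω ≤ 1 := by
    rw [ae_all_iff]
    intro n
    by_cases hn : 1 ≤ n
    · haveI : IsFiniteMeasure (P.trim (hFle (n-1))) := isFiniteMeasure_trim _
      have h0 : 0 ≤ᵐ[P] G n :=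
        condExp_nonneg (ae_of_all _ fun ω => (hY01 n ω).1)
      have h1 : G n ≤ᵐ[P] P[(fun _ => (1:ℝ)) | natFilt X (n-1)] :=
        condExp_mono (hYint n hn) (integrable_const 1) (ae_of_all _ fun ω => (hY01 n ω).2)
      rw [condExp_const (hFle (n-1))] at h1
      filter_upwards [h0, h1] with ω hω0 hω1 _
      exact ⟨hω0, hω1⟩
    · filter_upwards with ω h; exact absurd h hn
  -- martingale differences
  set D : ℕ → Ω → ℝ := fun n ω => Y n ω - G n ω with hDdef
  have hadp : ∀ p q : ℕ, 1 ≤ p → p < q → StronglyMeasurable[natFilt X (q-1)] (D p) := by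
    intro p q hp hpq
    have hpq1 : p - 1 ≤ q - 1 := by omega
    have hid : @Measurable Ω Ω (natFilt X (q-1)) (natFilt X (p-1)) id :=
      measurable_id'' (hFmono _ _ hpq1)
    have hXp : Measurable[natFilt X (q-1)] (X p) := hXF p (q-1) hp (by omega)
    have hmk : @Measurable Ω (Ω × α) (natFilt X (q-1))
        ((natFilt X (p-1)).prod (inferInstance : MeasurableSpace α))
        (fun ω => (ω, X p ω)) := by
      refine Measurable.prod ?_ ?_
      · exact hid
      · exact hXp
    have hEp : MeasurableSet[natFilt X (q-1)] (E p) := hmk (hSmeas p hp)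
    have hYsm : StronglyMeasurable[natFilt X (q-1)] (Y p) := by
      rw [hYdef]
      exact stronglyMeasurable_const.indicator hEp
    have hGsm : StronglyMeasurable[natFilt X (q-1)] (G p) := by
      rw [hGdef]
      exact stronglyMeasurable_condExp.mono (hFmono _ _ hpq1)
    have : D p = Y p - G p := by funext ω; simp [hDdef]
    rw [this]
    exact hYsm.sub hGsm
  have hbddD : ∀ n, 1 ≤ n → ∀ᵐ ω ∂P, |D n ω| ≤ 1 := by
    intro n hn
    filter_upwards [hG01] with ω hω
    obtain ⟨h0, h1⟩ := hω n hn
    obtain ⟨hy0, hy1⟩ := hY01 n ω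
    rw [hDdef]
    simp only
    rw [abs_le]
    constructor <;> linarith
  have hcondD : ∀ n, 1 ≤ n → P[D n | natFilt X (n-1)] =ᵐ[P] 0 := by
    intro n hn
    haveI : IsFiniteMeasure (P.trim (hFle (n-1))) := isFiniteMeasure_trim _
    have hDfun : D n = Y n - G n := by funext ω; simp [hDdef]
    have h1 : P[Y n - G n | natFilt X (n-1)] =ᵐ[P]
        P[Y n | natFilt X (n-1)] - P[G n | natFilt X (n-1)] :=
      condExp_sub (hYint n hn) integrable_condExp (natFilt X (n-1))
    have h2 : P[G n | natFilt X (n-1)] = G n := by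
      rw [hGdef]
      exact condExp_of_stronglyMeasurable (hFle (n-1)) stronglyMeasurable_condExp
        integrable_condExp
    rw [hDfun]
    filter_upwards [h1] with ω hω
    rw [hω]
    simp only [Pi.sub_apply, h2]
    have : (P[Y n | natFilt X (n-1)]) ω = G n ω := by rw [hGdef]
    rw [this]
    simp
  have htend := slln_mds P (natFilt X) hFle D hadp hbddD hcondD
  -- process hsmall pointwise
  filter_upwards [htend, hstep1, hG01, hsmall] with ω htendω hstepω hG01ω hlimω
  -- choose j and N₀
  obtain ⟨r, hr0, hLr, hrδ⟩ := ENNReal.lt_iff_exists_real_btwn.1 hlimω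
  have hrδ' : r < δ := (ENNReal.ofReal_lt_ofReal_iff hδ).1 hrδ
  obtain ⟨j, hjgt⟩ := exists_nat_gt (1/(δ - r))
  have hdr : (0:ℝ) < δ - r := by linarith
  have h1j : 1/((j:ℝ)+1) < δ - r := by
    rw [div_lt_iff₀ (by positivity)]
    rw [div_lt_iff₀ hdr] at hjgt
    nlinarith
  have hjδ : 1/((j:ℝ)+1) ≤ δ := by linarith
  have hev : ∀ᶠ n in atTop, ν (A n ω) ≤ ENNReal.ofReal (δ - 1/((j:ℝ)+1)) := by
    have hev0 := eventually_lt_of_limsup_lt hLr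
    filter_upwards [hev0] with n hn
    exact le_trans hn.le (ENNReal.ofReal_le_ofReal (by linarith))
  obtain ⟨N₀, hN₀⟩ := eventually_atTop.1 hev
  set N₁ : ℕ := max N₀ 1 with hN₁
  have hGc : ∀ n, N₁ ≤ n → G n ω ≤ c := by
    intro n hn
    exact hstepω n j (by omega) hjδ (hN₀ n (by omega))
  -- rewrite the sum
  have hsum_eq : ∀ N : ℕ, (∑ n ∈ Finset.Icc 1 N, (A n ω).indicator (fun _ => (1:ℝ)) (X n ω))
      = ∑ n ∈ Finset.Icc 1 N, Y n ω := by
    intro N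
    refine Finset.sum_congr rfl fun n _ => ?_
    exact congrFun (hYeq n) ω
  have hgoal_eq : (fun N : ℕ => (∑ n ∈ Finset.Icc 1 N,
      (A n ω).indicator (fun _ => (1:ℝ)) (X n ω)) / (N:ℝ)) =
      fun N : ℕ => (∑ n ∈ Finset.Icc 1 N, Y n ω) / (N:ℝ) := by
    funext N; rw [hsum_eq]
  rw [hgoal_eq]
  set u : ℕ → ℝ := fun N => (∑ n ∈ Finset.Icc 1 N, Y n ω) / (N:ℝ) with hu
  have hunonneg : ∀ N, 0 ≤ u N := by
    intro N
    refine div_nonneg ?_ (Nat.cast_nonneg N)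
    exact Finset.sum_nonneg fun n _ => (hY01 n ω).1
  have hbound : ∀ b : ℝ, 0 < b → Filter.limsup u atTop ≤ c + b := by
    intro b hb
    refine Filter.limsup_le_of_le ?_ ?_
    · exact Filter.isCoboundedUnder_le_of_eventually_le atTop (x := 0)
        (Filter.Eventually.of_forall hunonneg)
    · -- eventually u N ≤ c + b
      have hev1 : ∀ᶠ N in atTop, (∑ n ∈ Finset.Icc 1 N, D n ω) / (N:ℝ) ≤ b/2 :=
        htendω.eventually_le_const (by positivity : (0:ℝ) < b/2)
      have hev2 : ∀ᶠ N : ℕ in atTop, ((N₁:ℝ))/(N:ℝ) ≤ b/2 :=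
        (tendsto_const_div_atTop_nhds_zero_nat (N₁:ℝ)).eventually_le_const
          (by positivity : (0:ℝ) < b/2)
      filter_upwards [hev1, hev2, eventually_ge_atTop 1] with N h1 h2 hN1
      have hNpos : (0:ℝ) < (N:ℝ) := by exact_mod_cast hN1
      have hdecomp : u N = (∑ n ∈ Finset.Icc 1 N, D n ω) / (N:ℝ)
          + (∑ n ∈ Finset.Icc 1 N, G n ω) / (N:ℝ) := by
        rw [hu]
        simp only
        rw [← add_div]
        congr 1
        rw [← Finset.sum_add_distrib]
        refine Finset.sum_congr rfl fun n _ => ?_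
        simp [hDdef]
      have hsumG : (∑ n ∈ Finset.Icc 1 N, G n ω) ≤ (N:ℝ) * c + (N₁:ℝ) := by
        have hterm : ∀ n ∈ Finset.Icc 1 N, G n ω ≤ c + (if n < N₁ then (1:ℝ) else 0) := by
          intro n hn
          have hn1 : 1 ≤ n := (Finset.mem_Icc.1 hn).1
          by_cases h : n < N₁
          · rw [if_pos h]
            have := (hG01ω n hn1).2
            linarith
          · rw [if_neg h]
            simpa using hGc n (by omega)
        calc (∑ n ∈ Finset.Icc 1 N, G n ω)
            ≤ ∑ n ∈ Finset.Icc 1 N, (c + (if n < N₁ then (1:ℝ) else 0)) :=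
              Finset.sum_le_sum hterm
          _ = (N:ℝ) * c + ∑ n ∈ Finset.Icc 1 N, (if n < N₁ then (1:ℝ) else 0) := by
              rw [Finset.sum_add_distrib, Finset.sum_const, Nat.card_Icc]
              simp [nsmul_eq_mul]
          _ ≤ (N:ℝ) * c + (N₁:ℝ) := by
              refine add_le_add_right ?_ _
              rw [Finset.sum_boole]
              have hsub : (Finset.Icc 1 N).filter (fun n => n < N₁) ⊆ Finset.Ico 1 N₁ := by
                intro n hn
                rw [Finset.mem_filter, Finset.mem_Icc] at hn
                rw [Finset.mem_Ico]
                exact ⟨hn.1.1, hn.2⟩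
              have hcard := Finset.card_le_card hsub
              rw [Nat.card_Ico] at hcard
              calc (((Finset.Icc 1 N).filter (fun n => n < N₁)).card : ℝ)
                  ≤ ((N₁ - 1 : ℕ):ℝ) := by exact_mod_cast hcard
                _ ≤ (N₁:ℝ) := by
                    have : (N₁ - 1 : ℕ) ≤ N₁ := by omega
                    exact_mod_cast this
      have hGdiv : (∑ n ∈ Finset.Icc 1 N, G n ω) / (N:ℝ) ≤ c + (N₁:ℝ)/(N:ℝ) := by
        rw [div_le_iff₀ hNpos]
        calc (∑ n ∈ Finset.Icc 1 N, G n ω) ≤ (N:ℝ) * c + (N₁:ℝ) := hsumG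
          _ = (c + (N₁:ℝ)/(N:ℝ)) * (N:ℝ) := by field_simp
      calc u N = (∑ n ∈ Finset.Icc 1 N, D n ω) / (N:ℝ)
            + (∑ n ∈ Finset.Icc 1 N, G n ω) / (N:ℝ) := hdecomp
        _ ≤ b/2 + (c + (N₁:ℝ)/(N:ℝ)) := add_le_add h1 hGdiv
        _ ≤ b/2 + (c + b/2) := by linarith [h2]
        _ = c + b := by ring
  refine le_of_forall_pos_le_add fun b hb => hbound b hb
end
end

section
/- Let (𝒳, ρ, ν) be a metric measure space where ρ is a separable metric and ν is a finite Borel measure. Let (X_n)_{n≥1} be a stochastic process in 𝒳 that is ergodically dominated by ν, and let η : 𝒳 → 𝒴 be a measurable function with ν-negligible boundary, ν(∂_η𝒳) = 0. Then for any (measurable) nearest neighbor process (X̃_n), almost surely limsup_{N→∞} (1/N) Σ_{n=1}^N 1{η(X_n) ≠ η(X̃_n)} = 0. -/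
open MeasureTheory Filter Set Metric
open scoped ENNReal NNReal

noncomputable section

lemma margin_le_edist {α 𝒴 : Type*} [PseudoMetricSpace α] (η : α → 𝒴) {x x' : α}
    (h : η x' ≠ η x) : margin η x ≤ edist x x' :=
  iInf₂_le x' h

lemma ind_nonneg {β : Type*} (s : Set β) (b : β) :
    0 ≤ Set.indicator s (fun _ => (1 : ℝ)) b :=
  Set.indicator_nonneg (fun _ _ => zero_le_one) b

lemma ind_le_one {β : Type*} (s : Set β) (b : β) :
    Set.indicator s (fun _ => (1 : ℝ)) b ≤ 1 := by
  classical
  rw [Set.indicator_apply]; split_ifs <;> norm_num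

lemma isOpen_margin_lt {α 𝒴 : Type*} [PseudoMetricSpace α] (η : α → 𝒴) (c : ℝ≥0∞) :
    IsOpen {x | margin η x < c} := by
  rw [EMetric.isOpen_iff]
  intro x hx
  simp only [Set.mem_setOf_eq, margin, iInf_lt_iff] at hx
  obtain ⟨x', hx', hlt⟩ := hx
  obtain ⟨b, hb1, hb2⟩ := exists_between hlt
  refine ⟨b - edist x x', by simpa [tsub_pos_iff_lt] using hb1, ?_⟩
  intro y hy
  simp only [EMetric.mem_ball] at hy
  by_cases hyx : η y = η x
  · have h1 : margin η y ≤ edist y x' := margin_le_edist η (by rw [hyx]; exact hx')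
    calc margin η y ≤ edist y x' := h1
      _ ≤ edist y x + edist x x' := edist_triangle _ _ _
      _ < (b - edist x x') + edist x x' := ENNReal.add_lt_add_right (edist_ne_top _ _) hy
      _ = b := tsub_add_cancel_of_le hb1.le
      _ < c := hb2
  · have h1 : margin η y ≤ edist y x := margin_le_edist η (fun h => hyx h.symm)
    calc margin η y ≤ edist y x := h1
      _ < b - edist x x' := hy
      _ ≤ b := tsub_le_self
      _ < c := hb2

/-- Deterministic counting bound. -/
lemma nn_count_bound {α 𝒴 : Type*} [MetricSpace α] (η : α → 𝒴) (x xt : ℕ → α)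
    (hnn : IsNNProcess x xt) {t : ℝ} (ht : 0 < t) (u : ℕ → α) (K : ℕ) (N : ℕ) :
    (∑ n ∈ Finset.Icc 1 N,
        Set.indicator {q : α × α | η q.1 ≠ η q.2} (fun _ => (1 : ℝ)) (x n, xt n))
      ≤ (K + 2 : ℝ)
        + (∑ n ∈ Finset.Icc 1 N,
            Set.indicator {a | margin η a < ENNReal.ofReal t} (fun _ => (1 : ℝ)) (x n))
        + (∑ n ∈ Finset.Icc 1 N,
            Set.indicator ((⋃ k ∈ Finset.range (K + 1), ball (u k) (t / 2))ᶜ)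
              (fun _ => (1 : ℝ)) (x n)) := by
  classical
  set Bs : Set α := {a | margin η a < ENNReal.ofReal t} with hBs
  set Cs : Set α := (⋃ k ∈ Finset.range (K + 1), ball (u k) (t / 2))ᶜ with hCs
  set S : Finset ℕ := (Finset.Icc 2 N).filter
    (fun n => η (x n) ≠ η (xt n) ∧ x n ∉ Bs ∧ x n ∉ Cs) with hS
  have hball : ∀ n ∈ S, ∃ k, k < K + 1 ∧ x n ∈ ball (u k) (t / 2) := by
    intro n hn
    have h := (Finset.mem_filter.1 hn).2.2.2
    simp only [hCs, Set.mem_compl_iff, not_not, Set.mem_iUnion, Finset.mem_range] at h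
    simpa using h
  have hfar : ∀ n ∈ S, ∀ m, 1 ≤ m → m < n → t ≤ dist (x n) (x m) := by
    intro n hn m hm1 hm2
    obtain ⟨hnI, hmis, hnB, _⟩ := Finset.mem_filter.1 hn
    have hn2 : 2 ≤ n := (Finset.mem_Icc.1 hnI).1
    have h1 : ENNReal.ofReal t ≤ margin η (x n) := not_lt.1 hnB
    have h2 : margin η (x n) ≤ edist (x n) (xt n) :=
      margin_le_edist η (fun h => hmis h.symm)
    have h3 : ENNReal.ofReal t ≤ ENNReal.ofReal (dist (x n) (xt n)) := by
      rw [← edist_dist]; exact h1.trans h2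
    have h4 : t ≤ dist (x n) (xt n) :=
      (ENNReal.ofReal_le_ofReal_iff dist_nonneg).1 h3
    exact h4.trans ((hnn n hn2).2 m hm1 hm2)
  have hcard : S.card ≤ K + 1 := by
    have main : ∀ p ∈ S, ∀ q ∈ S, p < q →
        (if h : ∃ k, k < K + 1 ∧ x p ∈ ball (u k) (t / 2) then Nat.find h else 0)
          = (if h : ∃ k, k < K + 1 ∧ x q ∈ ball (u k) (t / 2) then Nat.find h else 0)
          → False := by
      intro p hp q hq hlt heq
      have hex := hball p hp
      have hex' := hball q hq
      rw [dif_pos hex, dif_pos hex'] at heq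
      have hk := Nat.find_spec hex
      have hk' := Nat.find_spec hex'
      rw [heq] at hk
      have hdd : dist (x q) (x p) < t := by
        rw [mem_ball] at hk hk'
        calc dist (x q) (x p) ≤ dist (x q) (u (Nat.find hex')) + dist (u (Nat.find hex')) (x p) :=
            dist_triangle _ _ _
          _ < t / 2 + t / 2 := add_lt_add hk'.2 (by rw [dist_comm]; exact hk.2)
          _ = t := by ring
      have hp1 : 1 ≤ p := le_trans one_le_two (Finset.mem_Icc.1 (Finset.mem_filter.1 hp).1).1
      exact absurd hdd (not_lt.2 (hfar q hq p hp1 hlt))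
    have hginj : Set.InjOn (fun n => if h : ∃ k, k < K + 1 ∧ x n ∈ ball (u k) (t / 2)
        then Nat.find h else 0) ↑S := by
      intro n hn n' hn' heq
      by_contra hne
      rcases lt_or_gt_of_ne hne with h | h
      · exact main n hn n' hn' h heq
      · exact main n' hn' n hn h heq.symm
    calc S.card = (S.image (fun n => if h : ∃ k, k < K + 1 ∧ x n ∈ ball (u k) (t / 2)
        then Nat.find h else 0)).card := (Finset.card_image_of_injOn hginj).symm
      _ ≤ (Finset.range (K + 1)).card := by
          apply Finset.card_le_card
          intro k hk
          obtain ⟨n, hn, hkn⟩ := Finset.mem_image.1 hk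
          have hex := hball n hn
          rw [dif_pos hex] at hkn
          rw [Finset.mem_range, ← hkn]
          exact (Nat.find_spec hex).1
      _ = K + 1 := Finset.card_range _
  have hpt : ∀ n ∈ Finset.Icc 2 N,
      Set.indicator {q : α × α | η q.1 ≠ η q.2} (fun _ => (1 : ℝ)) (x n, xt n)
        ≤ Bs.indicator (fun _ => (1 : ℝ)) (x n) + Cs.indicator (fun _ => (1 : ℝ)) (x n)
          + (if n ∈ S then (1 : ℝ) else 0) := by
    intro n hn
    have hBn := ind_nonneg Bs (x n)
    have hCn := ind_nonneg Cs (x n)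
    have hmle := ind_le_one {q : α × α | η q.1 ≠ η q.2} (x n, xt n)
    by_cases hmis : η (x n) ≠ η (xt n)
    · by_cases hB : x n ∈ Bs
      · rw [Set.indicator_of_mem hB]
        split_ifs <;> linarith
      · by_cases hC : x n ∈ Cs
        · rw [Set.indicator_of_mem hC]
          split_ifs <;> linarith
        · have hnS : n ∈ S := Finset.mem_filter.2 ⟨hn, hmis, hB, hC⟩
          rw [if_pos hnS]
          linarith
    · have : Set.indicator {q : α × α | η q.1 ≠ η q.2} (fun _ => (1 : ℝ)) (x n, xt n) = 0 :=
        Set.indicator_of_notMem (by simpa using hmis) _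
      rw [this]
      split_ifs <;> linarith
  -- assemble
  have hsum2 : (∑ n ∈ Finset.Icc 2 N,
      Set.indicator {q : α × α | η q.1 ≠ η q.2} (fun _ => (1 : ℝ)) (x n, xt n))
      ≤ (∑ n ∈ Finset.Icc 2 N, Bs.indicator (fun _ => (1 : ℝ)) (x n))
        + (∑ n ∈ Finset.Icc 2 N, Cs.indicator (fun _ => (1 : ℝ)) (x n))
        + (K + 1 : ℝ) := by
    have h1 := Finset.sum_le_sum hpt
    rw [Finset.sum_add_distrib, Finset.sum_add_distrib] at h1
    have h2 : (∑ n ∈ Finset.Icc 2 N, (if n ∈ S then (1 : ℝ) else 0)) = S.card := by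
      rw [Finset.sum_ite_mem, Finset.inter_eq_right.2 (Finset.filter_subset _ _),
        Finset.sum_const, nsmul_eq_mul, mul_one]
    rw [h2] at h1
    have h3 : (S.card : ℝ) ≤ (K + 1 : ℝ) := by exact_mod_cast hcard
    linarith
  have hsplit : (∑ n ∈ Finset.Icc 1 N,
      Set.indicator {q : α × α | η q.1 ≠ η q.2} (fun _ => (1 : ℝ)) (x n, xt n))
      ≤ 1 + ∑ n ∈ Finset.Icc 2 N,
        Set.indicator {q : α × α | η q.1 ≠ η q.2} (fun _ => (1 : ℝ)) (x n, xt n) := by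
    rcases Nat.lt_or_ge N 1 with h | h
    · interval_cases N
      simp
    · rw [Finset.Icc_eq_cons_Ioc h, Finset.sum_cons, ← Finset.Icc_add_one_left_eq_Ioc, show (1 : ℕ) + 1 = 2 from rfl]
      have := ind_le_one {q : α × α | η q.1 ≠ η q.2} (x 1, xt 1)
      linarith
  have hmono : ∀ (s : Set α), (∑ n ∈ Finset.Icc 2 N, s.indicator (fun _ => (1 : ℝ)) (x n))
      ≤ ∑ n ∈ Finset.Icc 1 N, s.indicator (fun _ => (1 : ℝ)) (x n) := by
    intro s
    apply Finset.sum_le_sum_of_subset_of_nonneg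
    · apply Finset.Icc_subset_Icc_left; norm_num
    · intro i _ _; exact ind_nonneg s (x i)
  have := hmono Bs
  have := hmono Cs
  linarith

/-- Online consistency for functions with negligible boundary: if `X`
is ergodically dominated by the finite Borel measure `ν` on a separable metric space and
`η` is measurable with `ν`-negligible boundary, then the nearest neighbor rule is online
consistent: the asymptotic mistake rate vanishes almost surely. -/
theorem nn_online_consistent_of_negligible_boundary
    {Ω α 𝒴 : Type*} [MeasurableSpace Ω] [MetricSpace α] [TopologicalSpace.SeparableSpace α]
    [MeasurableSpace α] [BorelSpace α] [MeasurableSpace 𝒴]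
    (P : Measure Ω) [IsProbabilityMeasure P] (ν : Measure α) [IsFiniteMeasure ν]
    (X : ℕ → Ω → α) (hX : ∀ n, Measurable (X n))
    (hed : ErgodicallyDominated P X ν)
    (η : α → 𝒴) (hη : Measurable η) (hbd : ν (labelBoundary η) = 0)
    (Xt : ℕ → Ω → α) (hXt : ∀ n, Measurable (Xt n))
    (hnn : ∀ ω, IsNNProcess (fun n => X n ω) (fun n => Xt n ω)) :
    ∀ᵐ ω ∂P, Filter.limsup (fun N : ℕ =>
      (∑ n ∈ Finset.Icc 1 N,
        Set.indicator {q : α × α | η q.1 ≠ η q.2} (fun _ => (1 : ℝ)) (X n ω, Xt n ω)) / N)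
      atTop = 0 := by
  classical
  rcases isEmpty_or_nonempty α with hα | hα
  · filter_upwards with ω
    exact (hα.false (X 1 ω)).elim
  have hu : DenseRange (TopologicalSpace.denseSeq α) := TopologicalSpace.denseRange_denseSeq α
  set u := TopologicalSpace.denseSeq α with hudef
  have havg_nonneg : ∀ (β : Type _) (s : Set β) (v : ℕ → β) (N : ℕ),
      0 ≤ (∑ n ∈ Finset.Icc 1 N, s.indicator (fun _ => (1 : ℝ)) (v n)) / N := by
    intro β s v N
    apply div_nonneg _ (Nat.cast_nonneg N)
    exact Finset.sum_nonneg fun n _ => ind_nonneg s (v n)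
  have havg_le_one : ∀ (β : Type _) (s : Set β) (v : ℕ → β) (N : ℕ),
      (∑ n ∈ Finset.Icc 1 N, s.indicator (fun _ => (1 : ℝ)) (v n)) / N ≤ 1 := by
    intro β s v N
    rcases Nat.eq_zero_or_pos N with h0 | h0
    · subst h0; simp
    · rw [div_le_one (by exact_mod_cast h0)]
      calc (∑ n ∈ Finset.Icc 1 N, s.indicator (fun _ => (1 : ℝ)) (v n))
          ≤ ∑ n ∈ Finset.Icc 1 N, (1 : ℝ) :=
            Finset.sum_le_sum fun n _ => ind_le_one s (v n)
        _ = ((Finset.Icc 1 N).card : ℝ) := by rw [Finset.sum_const, nsmul_eq_mul, mul_one]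
        _ = (N : ℝ) := by rw [Nat.card_Icc]; norm_num
  have key : ∀ ε : ℝ, 0 < ε → ∀ᵐ ω ∂P,
      Filter.limsup (fun N : ℕ =>
        (∑ n ∈ Finset.Icc 1 N,
          Set.indicator {q : α × α | η q.1 ≠ η q.2} (fun _ => (1 : ℝ)) (X n ω, Xt n ω)) / N)
        atTop ≤ 3 * ε := by
    intro ε hε
    obtain ⟨δ, hδ, hδp⟩ := hed ε hε
    -- choose margin threshold t
    set A : ℕ → Set α := fun m => {x | margin η x < ENNReal.ofReal (1 / ((m : ℝ) + 1))} with hA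
    have hAopen : ∀ m, IsOpen (A m) := fun m => isOpen_margin_lt η _
    have hAanti : Antitone A := by
      intro m m' hmm x hx
      refine lt_of_lt_of_le hx (ENNReal.ofReal_le_ofReal ?_)
      apply one_div_le_one_div_of_le
      · positivity
      · have : (m : ℝ) ≤ (m' : ℝ) := by exact_mod_cast hmm
        linarith
    have hAint : ⋂ m, A m = labelBoundary η := by
      ext x
      simp only [Set.mem_iInter, hA, Set.mem_setOf_eq, labelBoundary]
      constructor
      · intro h
        have hle : ∀ m : ℕ, margin η x ≤ ENNReal.ofReal (1 / ((m : ℝ) + 1)) :=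
          fun m => (h m).le
        have htend : Filter.Tendsto (fun m : ℕ => ENNReal.ofReal (1 / ((m : ℝ) + 1)))
            atTop (nhds 0) := by
          rw [← ENNReal.ofReal_zero]
          exact (ENNReal.continuous_ofReal.tendsto 0).comp
            tendsto_one_div_add_atTop_nhds_zero_nat
        have := ge_of_tendsto' htend hle
        exact le_antisymm this zero_le
      · intro h m
        rw [h]
        exact ENNReal.ofReal_pos.2 (by positivity)
    have hmeasA := MeasureTheory.tendsto_measure_iInter_atTop
      (fun m => (hAopen m).measurableSet.nullMeasurableSet) hAanti ⟨0, measure_ne_top ν _⟩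
    rw [hAint, hbd] at hmeasA
    obtain ⟨m, hm⟩ := (hmeasA.eventually_lt_const (ENNReal.ofReal_pos.2 hδ)).exists
    set t : ℝ := 1 / ((m : ℝ) + 1) with htdef
    have ht : 0 < t := by positivity
    -- choose tail K
    set C : ℕ → Set α := fun K => (⋃ k ∈ Finset.range (K + 1), ball (u k) (t / 2))ᶜ with hC
    have hCmeas : ∀ K, MeasurableSet (C K) :=
      fun K => (isOpen_biUnion fun k _ => isOpen_ball).measurableSet.compl
    have hCanti : Antitone C := by
      intro K K' hKK
      apply Set.compl_subset_compl.2
      intro y hy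
      simp only [Set.mem_iUnion, Finset.mem_range] at hy ⊢
      obtain ⟨k, hk, hky⟩ := hy
      exact ⟨k, by omega, hky⟩
    have hCint : ⋂ K, C K = ∅ := by
      ext y
      simp only [Set.mem_iInter, Set.mem_empty_iff_false, iff_false, not_forall]
      obtain ⟨k, hk⟩ := hu.exists_dist_lt y (half_pos ht)
      refine ⟨k, ?_⟩
      simp only [hC, Set.mem_compl_iff, not_not, Set.mem_iUnion]
      exact ⟨k, by simp, mem_ball.2 hk⟩
    have hmeasC := MeasureTheory.tendsto_measure_iInter_atTop
      (fun K => (hCmeas K).nullMeasurableSet) hCanti ⟨0, measure_ne_top ν _⟩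
    rw [hCint, measure_empty] at hmeasC
    obtain ⟨K, hK⟩ := (hmeasC.eventually_lt_const (ENNReal.ofReal_pos.2 hδ)).exists
    have hωBae := hδp (A m) (hAopen m).measurableSet hm
    have hωCae := hδp (C K) (hCmeas K) hK
    filter_upwards [hωBae, hωCae] with ω hωB hωC
    have hbB : Filter.IsBoundedUnder (· ≤ ·) atTop (fun N : ℕ =>
        (∑ n ∈ Finset.Icc 1 N, (A m).indicator (fun _ => (1 : ℝ)) (X n ω)) / N) :=
      ⟨1, Filter.eventually_map.2 (Filter.Eventually.of_forall fun N =>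
        havg_le_one α (A m) (fun n => X n ω) N)⟩
    have hbC : Filter.IsBoundedUnder (· ≤ ·) atTop (fun N : ℕ =>
        (∑ n ∈ Finset.Icc 1 N, (C K).indicator (fun _ => (1 : ℝ)) (X n ω)) / N) :=
      ⟨1, Filter.eventually_map.2 (Filter.Eventually.of_forall fun N =>
        havg_le_one α (C K) (fun n => X n ω) N)⟩
    have e1 := Filter.eventually_lt_of_limsup_lt hωB hbB
    have e2 := Filter.eventually_lt_of_limsup_lt hωC hbC
    have e3 : ∀ᶠ N : ℕ in atTop, ((K : ℝ) + 2) / N < ε :=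
      (tendsto_const_div_atTop_nhds_zero_nat ((K : ℝ) + 2)).eventually_lt_const hε
    have e4 : ∀ᶠ N : ℕ in atTop,
        (∑ n ∈ Finset.Icc 1 N,
          Set.indicator {q : α × α | η q.1 ≠ η q.2} (fun _ => (1 : ℝ)) (X n ω, Xt n ω)) / N
          ≤ 3 * ε := by
      filter_upwards [e1, e2, e3] with N h1 h2 h3
      rcases Nat.eq_zero_or_pos N with h0 | h0
      · subst h0; simp; positivity
      · have hN : (0 : ℝ) < N := by exact_mod_cast h0
        have hdet := nn_count_bound η (fun n => X n ω) (fun n => Xt n ω) (hnn ω) ht u K N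
        have hdiv : (∑ n ∈ Finset.Icc 1 N,
            Set.indicator {q : α × α | η q.1 ≠ η q.2} (fun _ => (1 : ℝ)) (X n ω, Xt n ω)) / N
            ≤ (((K : ℝ) + 2)
              + (∑ n ∈ Finset.Icc 1 N, (A m).indicator (fun _ => (1 : ℝ)) (X n ω))
              + (∑ n ∈ Finset.Icc 1 N, (C K).indicator (fun _ => (1 : ℝ)) (X n ω))) / N := by
          gcongr
        rw [add_div, add_div] at hdiv
        linarith
    have hcb : Filter.IsCoboundedUnder (· ≤ ·) atTop (fun N : ℕ =>
        (∑ n ∈ Finset.Icc 1 N,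
          Set.indicator {q : α × α | η q.1 ≠ η q.2} (fun _ => (1 : ℝ)) (X n ω, Xt n ω)) / N) :=
      Filter.IsBoundedUnder.isCoboundedUnder_le
        ⟨0, Filter.eventually_map.2 (Filter.Eventually.of_forall fun N =>
          havg_nonneg (α × α) {q : α × α | η q.1 ≠ η q.2} (fun n => (X n ω, Xt n ω)) N)⟩
    exact Filter.limsup_le_of_le hcb e4
  have h2 : ∀ᵐ ω ∂P, ∀ k : ℕ,
      Filter.limsup (fun N : ℕ =>
        (∑ n ∈ Finset.Icc 1 N,
          Set.indicator {q : α × α | η q.1 ≠ η q.2} (fun _ => (1 : ℝ)) (X n ω, Xt n ω)) / N)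
        atTop ≤ 3 * (1 / ((k : ℝ) + 1)) :=
    ae_all_iff.2 fun k => key (1 / ((k : ℝ) + 1)) (by positivity)
  filter_upwards [h2] with ω hω
  have hb : Filter.IsBoundedUnder (· ≤ ·) atTop (fun N : ℕ =>
      (∑ n ∈ Finset.Icc 1 N,
        Set.indicator {q : α × α | η q.1 ≠ η q.2} (fun _ => (1 : ℝ)) (X n ω, Xt n ω)) / N) :=
    ⟨1, Filter.eventually_map.2 (Filter.Eventually.of_forall fun N =>
      havg_le_one (α × α) {q : α × α | η q.1 ≠ η q.2} (fun n => (X n ω, Xt n ω)) N)⟩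
  have hge : (0 : ℝ) ≤ Filter.limsup (fun N : ℕ =>
      (∑ n ∈ Finset.Icc 1 N,
        Set.indicator {q : α × α | η q.1 ≠ η q.2} (fun _ => (1 : ℝ)) (X n ω, Xt n ω)) / N) atTop :=
    Filter.le_limsup_of_frequently_le (Filter.Frequently.of_forall fun N =>
      havg_nonneg (α × α) {q : α × α | η q.1 ≠ η q.2} (fun n => (X n ω, Xt n ω)) N) hb
  have hle : Filter.limsup (fun N : ℕ =>
      (∑ n ∈ Finset.Icc 1 N,
        Set.indicator {q : α × α | η q.1 ≠ η q.2} (fun _ => (1 : ℝ)) (X n ω, Xt n ω)) / N) atTop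
      ≤ 0 := by
    have htend : Filter.Tendsto (fun k : ℕ => 3 * (1 / ((k : ℝ) + 1))) atTop (nhds 0) := by
      simpa using tendsto_one_div_add_atTop_nhds_zero_nat.const_mul (3 : ℝ)
    exact ge_of_tendsto' htend hω
  exact le_antisymm hle hge
end
end

section
/- Let (𝒳, ρ, ν) be a metric measure space where ρ is a doubling metric and ν is a finite Borel measure. Then the set 𝓕₀ of functions with ν-negligible boundary is dense in L¹(𝒳, ν): for every g ∈ L¹(𝒳, ν; ℝ) and every δ > 0 there exists g' ∈ L¹(𝒳, ν; ℝ) with ν(∂_{g'}𝒳) = 0 and ‖g − g'‖_{L¹(𝒳,ν)} < δ. -/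
open MeasureTheory Filter Set Metric
open scoped ENNReal NNReal

noncomputable section

/-!
Approximate `g` in `L¹` by a bounded continuous `f` and round `f` down to a grid `c + εℤ`.
The rounded function is locally constant off `f ⁻¹' (c + εℤ)`, so its boundary lies in that
set; as `f` has only countably many level sets of positive measure, the offset `c` can be chosen
to make it null. Rounding moves `f` by at most `ε`, which costs at most `ε ν(α)` in `L¹`.
-/

open Topology

theorem notMem_labelBoundary_of_eventually_eq {α 𝒴 : Type*} [PseudoMetricSpace α]
    {η : α → 𝒴} {x : α} (h : ∀ᶠ y in 𝓝 x, η y = η x) : x ∉ labelBoundary η := by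
  obtain ⟨r, hr, hball⟩ := eventually_nhds_iff_ball.mp h
  have hmargin : ENNReal.ofReal r ≤ margin η x :=
    le_iInf₂ fun y hy => by
      rw [edist_dist]
      exact ENNReal.ofReal_le_ofReal (not_lt.mp fun hlt => hy (hball y (mem_ball'.mpr hlt)))
  intro (hx : margin η x = 0)
  rw [hx, nonpos_iff_eq_zero, ENNReal.ofReal_eq_zero] at hmargin
  exact hmargin.not_gt hr

def gridFloor (c ε t : ℝ) : ℝ := c + ε * ⌊(t - c) / ε⌋

section gridFloor

variable {c ε : ℝ}

theorem abs_sub_gridFloor_le (hε : 0 < ε) (t : ℝ) : |t - gridFloor c ε t| ≤ ε := by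
  have hle : ε * ⌊(t - c) / ε⌋ ≤ t - c := by
    rw [mul_comm, ← le_div_iff₀ hε]; exact Int.floor_le _
  have hlt : t - c < ε * (⌊(t - c) / ε⌋ + 1) := by
    rw [mul_comm, ← div_lt_iff₀ hε]; exact Int.lt_floor_add_one _
  rw [gridFloor, abs_le]
  constructor <;> linarith

theorem measurable_gridFloor : Measurable (gridFloor c ε) :=
  measurable_const.add <| measurable_const.mul <|
    measurable_from_top.comp ((measurable_id.sub_const c).div_const ε).floor

theorem gridFloor_eventually_eq (hε : 0 < ε) {t : ℝ}
    (ht : t ∉ range fun k : ℤ => c + ε * k) :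
    ∀ᶠ s in 𝓝 t, gridFloor c ε s = gridFloor c ε t := by
  have hk : (⌊(t - c) / ε⌋ : ℝ) < (t - c) / ε := by
    refine (Int.floor_le _).lt_of_ne fun hk => ht ⟨⌊(t - c) / ε⌋, ?_⟩
    change c + ε * ⌊(t - c) / ε⌋ = t
    rw [hk]
    field_simp
    ring
  have hcont : Continuous fun s : ℝ => (s - c) / ε := by fun_prop
  filter_upwards [hcont.continuousAt.eventually_mem (Ioo_mem_nhds hk (Int.lt_floor_add_one _))]
    with s hs
  rw [gridFloor, gridFloor, Int.floor_eq_on_Ico _ _ ⟨hs.1.le, hs.2⟩]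

theorem labelBoundary_gridFloor_comp_subset {α : Type*} [PseudoMetricSpace α] {f : α → ℝ}
    (hf : Continuous f) (hε : 0 < ε) :
    labelBoundary (gridFloor c ε ∘ f) ⊆ f ⁻¹' range fun k : ℤ => c + ε * k := by
  intro x hx
  by_contra hfx
  exact notMem_labelBoundary_of_eventually_eq
    (hf.continuousAt.eventually (gridFloor_eventually_eq hε hfx)) hx

end gridFloor

theorem exists_measure_preimage_grid_eq_zero {α : Type*} [MeasurableSpace α] {μ : Measure α}
    [SFinite μ] {f : α → ℝ} (hf : Measurable f) (ε : ℝ) :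
    ∃ c : ℝ, μ (f ⁻¹' range fun k : ℤ => c + ε * k) = 0 := by
  set bad := ⋃ k : ℤ, (· + ε * k) ⁻¹' {t | 0 < μ {a | f a = t}}
  have hbad : bad.Countable :=
    countable_iUnion fun k => (Measure.countable_meas_level_set_pos hf).preimage
      (add_left_injective _)
  obtain ⟨c, hc⟩ := (hbad.dense_compl ℝ).nonempty
  refine ⟨c, ?_⟩
  rw [← iUnion_singleton_eq_range, preimage_iUnion]
  exact measure_iUnion_null fun k =>
    nonpos_iff_eq_zero.mp (not_lt.mp fun hk => hc (mem_iUnion.mpr ⟨k, hk⟩))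

theorem exists_null_labelBoundary_abs_sub_le {α : Type*} [PseudoMetricSpace α]
    [MeasurableSpace α] [OpensMeasurableSpace α] (μ : Measure α) [SFinite μ] {f : α → ℝ}
    (hf : Continuous f) {ε : ℝ} (hε : 0 < ε) :
    ∃ f' : α → ℝ, Measurable f' ∧ μ (labelBoundary f') = 0 ∧
      ∀ x, |f x - f' x| ≤ ε := by
  obtain ⟨c, hc⟩ := exists_measure_preimage_grid_eq_zero (μ := μ) hf.measurable ε
  exact ⟨gridFloor c ε ∘ f, measurable_gridFloor.comp hf.measurable,
    measure_mono_null (labelBoundary_gridFloor_comp_subset hf hε) hc,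
    fun x => abs_sub_gridFloor_le hε (f x)⟩

section AbsSub

variable {α : Type*} [MeasurableSpace α] {μ : Measure α} {f g h : α → ℝ} {ε : ℝ}

theorem integral_abs_sub_le_add (hf : Integrable f μ) (hg : Integrable g μ)
    (hh : Integrable h μ) :
    ∫ x, |f x - h x| ∂μ ≤ ∫ x, |f x - g x| ∂μ + ∫ x, |g x - h x| ∂μ := by
  refine (integral_mono (hf.sub hh).abs ((hf.sub hg).abs.add (hg.sub hh).abs)
    fun x => abs_sub_le (f x) (g x) (h x)).trans_eq ?_
  exact integral_add (hf.sub hg).abs (hg.sub hh).abs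

variable [IsFiniteMeasure μ]

theorem MeasureTheory.Integrable.of_abs_sub_le (hf : Integrable f μ)
    (hg : AEStronglyMeasurable g μ) (hfg : ∀ x, |f x - g x| ≤ ε) : Integrable g μ := by
  refine (hf.abs.add (integrable_const ε)).mono' (g := fun x => |f x| + ε) hg
    (ae_of_all μ fun x => ?_)
  rw [Real.norm_eq_abs]
  linarith [abs_sub_abs_le_abs_sub (g x) (f x), abs_sub_comm (f x) (g x), hfg x]

theorem integral_abs_sub_le_of_abs_sub_le (hfg : ∀ x, |f x - g x| ≤ ε) :
    ∫ x, |f x - g x| ∂μ ≤ ε * μ.real univ := by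
  refine (le_abs_self _).trans ?_
  simpa only [Real.norm_eq_abs] using norm_integral_le_of_norm_le_const
    (ae_of_all μ fun x => (by rw [Real.norm_eq_abs, abs_abs]; exact hfg x :
      ‖|f x - g x|‖ ≤ ε))

end AbsSub

theorem negligible_boundary_dense_in_L1_general
    {α : Type*} [MetricSpace α] [MeasurableSpace α] [BorelSpace α]
    (ν : Measure α) [IsFiniteMeasure ν]
    (g : α → ℝ) (hg : Integrable g ν) (δ : ℝ) (hδ : 0 < δ) :
    ∃ g' : α → ℝ, Integrable g' ν ∧ ν (labelBoundary g') = 0 ∧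
      ∫ x, |g x - g' x| ∂ν < δ := by
  obtain ⟨f, hgf, hf⟩ := hg.exists_boundedContinuous_integral_sub_le (half_pos hδ)
  set ε := δ / (2 * (ν.real univ + 1))
  have hε : 0 < ε := by positivity
  have hεν : ε * ν.real univ < δ / 2 := by
    rw [div_mul_eq_mul_div, div_lt_iff₀ (by positivity)]
    nlinarith
  obtain ⟨g', hg'm, hg'null, hfg'⟩ :=
    exists_null_labelBoundary_abs_sub_le ν f.continuous hε
  have hg' : Integrable g' ν := hf.of_abs_sub_le hg'm.aestronglyMeasurable hfg'
  refine ⟨g', hg', hg'null, ?_⟩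
  calc ∫ x, |g x - g' x| ∂ν ≤ ∫ x, |g x - f x| ∂ν + ∫ x, |f x - g' x| ∂ν :=
        integral_abs_sub_le_add hg hf hg'
    _ ≤ δ / 2 + ε * ν.real univ := by
        gcongr
        · simpa only [Real.norm_eq_abs] using hgf
        · exact integral_abs_sub_le_of_abs_sub_le hfg'
    _ < δ := by linarith

/-- `𝓕₀` is dense in `L¹`: on a doubling metric space with a finite
Borel measure, every integrable real function can be approximated in `L¹` norm,
arbitrarily well, by an integrable function with `ν`-negligible boundary. -/
theorem negligible_boundary_dense_in_L1
    {α : Type*} [MetricSpace α] [MeasurableSpace α] [BorelSpace α]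
    (d : ℕ) (hd : DoublingWith α d) (ν : Measure α) [IsFiniteMeasure ν]
    (g : α → ℝ) (hg : Integrable g ν) (δ : ℝ) (hδ : 0 < δ) :
    ∃ g' : α → ℝ, Integrable g' ν ∧ ν (labelBoundary g') = 0 ∧
      ∫ x, |g x - g' x| ∂ν < δ :=
  negligible_boundary_dense_in_L1_general ν g hg δ hδ
end
end

section
/- Let (𝒳, ρ) be a metric space, U ⊆ 𝒳 a subset, and r > 0. For any sequence (X_n)_{n≥1} in 𝒳 and any nearest neighbor process (X̃_n), the number of indices n ≥ 2 such that X_n ∈ U and ρ(X_n, X̃_n) ≥ r is at most the r-packing number 𝒫_r(U). -/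
/-!
If `m < n` both count (`X m, X n ∈ U` with nearest-neighbour distances at least `r`), then
`r ≤ dist (X n) (Xt n) ≤ dist (X n) (X m)` since `Xt n` is a nearest earlier point. So the
counted points are pairwise `r`-separated, hence distinct as `r > 0`, and form an `r`-packing
of `U` in bijection with the counted indices.
-/

open MeasureTheory Filter Set Metric
open scoped ENNReal NNReal

noncomputable section

section Packing

variable {α : Type*} [PseudoMetricSpace α] {r : ℝ} {U : Set α}

theorem Finset.card_le_packingNumber {Z : Finset α} (hZU : ↑Z ⊆ U)
    (hZ : (Z : Set α).Pairwise fun z z' => r ≤ dist z z') :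
    (Z.card : ℕ∞) ≤ packingNumber r U :=
  le_iSup₂ (f := fun (Z : Finset α) (_ : ↑Z ⊆ U ∧ ∀ z ∈ Z, ∀ z' ∈ Z, z ≠ z' → r ≤ dist z z') =>
    (Z.card : ℕ∞)) Z ⟨hZU, hZ⟩

theorem Set.encard_le_packingNumber {Z : Set α} (hZU : Z ⊆ U)
    (hZ : Z.Pairwise fun z z' => r ≤ dist z z') :
    Z.encard ≤ packingNumber r U := by
  refine ENat.forall_natCast_le_iff_le.mp fun k hk => ?_
  obtain ⟨t, htZ, htk⟩ := Set.exists_subset_encard_eq hk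
  lift t to Finset α using Set.finite_of_encard_eq_coe htk
  rw [← htk, Set.encard_coe_eq_coe_finsetCard]
  exact Finset.card_le_packingNumber (htZ.trans hZU) (hZ.mono htZ)

end Packing

theorem IsNNProcess.pairwise_le_dist {α : Type*} [PseudoMetricSpace α] {X Xt : ℕ → α}
    (hnn : IsNNProcess X Xt) (r : ℝ) :
    {n | 2 ≤ n ∧ r ≤ dist (X n) (Xt n)}.Pairwise fun n m => r ≤ dist (X n) (X m) := by
  have key : ∀ ⦃m n⦄, 2 ≤ m → m < n → r ≤ dist (X n) (Xt n) → r ≤ dist (X n) (X m) :=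
    fun m n hm hmn hr => hr.trans <| (hnn n (by omega)).2 m (by omega) hmn
  rintro n ⟨hn, hrn⟩ m ⟨hm, hrm⟩ hnm
  rcases hnm.lt_or_gt with hlt | hlt
  · exact dist_comm (X n) (X m) ▸ key hn hlt hrm
  · exact key hm hlt hrn

/-- Packing bound: for any sequence and nearest neighbor process, the
number of times `n ≥ 2` at which `X n ∈ U` and the nearest neighbor distance is at least
`r` is bounded by the `r`-packing number of `U`. -/
theorem separated_events_le_packingNumber
    {α : Type*} [MetricSpace α] (U : Set α) (r : ℝ) (hr : 0 < r)
    (X Xt : ℕ → α) (hnn : IsNNProcess X Xt) :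
    Set.encard {n : ℕ | 2 ≤ n ∧ X n ∈ U ∧ r ≤ dist (X n) (Xt n)} ≤ packingNumber r U := by
  set S := {n : ℕ | 2 ≤ n ∧ X n ∈ U ∧ r ≤ dist (X n) (Xt n)}
  have hsep : S.Pairwise fun n m => r ≤ dist (X n) (X m) :=
    (hnn.pairwise_le_dist r).mono fun _ hn => by exact ⟨hn.1, hn.2.2⟩
  have hinj : S.InjOn X := fun n hn m hm hXnm =>
    by_contra fun hnm => dist_pos.mp (hr.trans_le (hsep hn hm hnm)) hXnm
  rw [← hinj.encard_image]
  exact Set.encard_le_packingNumber (Set.image_subset_iff.mpr fun _ hn => hn.2.1)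
    (hinj.pairwise_image.mpr hsep)
end
end
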